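/- arXiv:2312.01137 — 12 statements merged into one kernel-verified Lean document; each statement's English description precedes it below -/
import Mathlib

section
/- For the target block diagonal affinity matrix W, the matrix D is invertible and the characteristic polynomial of D^{−1} L equals X^K · ∏_{i=1}^{K} (X − N_i/(N_i − 1))^{N_i − 1}; equivalently, the generalized eigenvalues of the pair (L, D), counted with multiplicity, consist of K zeros together with, for each block i, the value N_i/(N_i − 1) repeated N_i − 1 times. -/
/-!
The condition on `β` only places block `i` inside an interval of length `n i`; as these lengths add
up to `N`, every block has exactly `n i` elements. Hence the rows of `W` in block `i` sum to
`(n i - 1) w i`, and `D⁻¹ L` is block diagonal with block `i` equal to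
`(n i / (n i - 1)) • 1 - (n i - 1)⁻¹ • J`, where `J` is the all-ones matrix. As `J` has rank one and
trace `n i`, this block has the eigenvalue `n i / (n i - 1)` with multiplicity `n i - 1` and the
simple eigenvalue `0`.
-/

open Finset Matrix Polynomial

theorem Finset.card_fiber_eq_of_mem_Ico {ι κ : Type*} [Fintype ι] [Fintype κ] [DecidableEq κ]
    (β : ι → κ) (f : ι → ℕ) (hf : Function.Injective f) (o n : κ → ℕ)
    (hcard : Fintype.card ι = ∑ i, n i) (hβ : ∀ m, f m ∈ Ico (o (β m)) (o (β m) + n (β m)))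
    (i : κ) : #{m | β m = i} = n i := by
  have hle : ∀ i, #{m | β m = i} ≤ n i := fun i => by
    simpa using card_le_card_of_injOn f (s := {m | β m = i}) (t := Ico (o i) (o i + n i))
      (fun m hm => (mem_filter.1 hm).2 ▸ hβ m) hf.injOn
  have hsum : ∑ i, #{m | β m = i} = ∑ i, n i := by
    rw [← hcard, ← card_univ, card_eq_sum_card_fiberwise (t := univ) (f := β) (by simp)]
  exact (sum_eq_sum_iff_of_le fun i _ => hle i).1 hsum i (mem_univ i)

section Charpoly

variable {R : Type*} [CommRing R] {ι : Type*} [Fintype ι] [DecidableEq ι]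

theorem Matrix.charpoly_of_ite_eq [Nonempty ι] (a b : R) :
    (of fun i j : ι => if i = j then a else b).charpoly =
      (X - C (a - b)) ^ (Fintype.card ι - 1) * (X - C (a - b + Fintype.card ι * b)) := by
  have hM : (of fun i j : ι => if i = j then a else b) =
      vecMulVec (fun _ => b) (fun _ => 1) - scalar ι (b - a) := by
    ext i j
    by_cases h : i = j <;> simp [h, vecMulVec_apply]
  obtain ⟨k, hk⟩ := Nat.exists_eq_add_one_of_ne_zero (Fintype.card_ne_zero (α := ι))
  rw [hM, charpoly_sub_scalar, charpoly_vecMulVec, hk]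
  simp only [pow_succ, dotProduct, mul_one, sum_const, card_univ, hk, nsmul_eq_mul, Nat.cast_add,
    Nat.cast_one, add_tsub_cancel_right, smul_eq_C_mul, map_mul, map_add, map_natCast, map_one,
    map_sub, sub_comp, mul_comp, pow_comp, X_comp, add_comp, natCast_comp, one_comp, C_comp]
  ring

theorem Matrix.charpoly_of_blockwise_ite_eq {κ : Type*} [Fintype κ] [LinearOrder κ] (β : ι → κ)
    (hβ : Function.Surjective β) (a b : κ → R) :
    (of fun m p => if β m = β p then (if m = p then a (β m) else b (β m)) else 0).charpoly =
      ∏ i, (X - C (a i - b i)) ^ (#{m | β m = i} - 1) *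
        (X - C (a i - b i + #{m | β m = i} * b i)) := by
  set M := of fun m p => if β m = β p then (if m = p then a (β m) else b (β m)) else 0
  have hM : M.BlockTriangular β := fun m p h => if_neg h.ne'
  rw [hM.charpoly, image_univ_of_surjective hβ]
  refine prod_congr rfl fun i _ => ?_
  obtain ⟨m, rfl⟩ := hβ i
  have : Nonempty {p // β p = β m} := ⟨⟨m, rfl⟩⟩
  have hblock : M.toSquareBlock β (β m) = of fun x y => if x = y then a (β m) else b (β m) := by
    ext x y
    simp [M, toSquareBlock_def, x.2, y.2, Subtype.ext_iff]
  rw [hblock, charpoly_of_ite_eq, Fintype.card_subtype]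

end Charpoly

theorem Finset.card_fiber_sub_one_ne_zero {ι κ F : Type*} [Fintype ι] [DecidableEq κ]
    [AddGroupWithOne F] [CharZero F] {β : ι → κ} (hsize : ∀ i, 2 ≤ #{m | β m = i}) (i : κ) :
    (#{m | β m = i} : F) - 1 ≠ 0 := by
  rw [sub_ne_zero, ← Nat.cast_one, Ne, Nat.cast_inj]
  have := hsize i
  omega

section BlockAffinity

variable {ι κ F : Type*} [Fintype ι] [DecidableEq ι] [DecidableEq κ]

def blockAffinity [Zero F] (β : ι → κ) (w : κ → F) : Matrix ι ι F :=
  of fun m p => if m ≠ p ∧ β m = β p then w (β m) else 0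

def blockDegree [AddCommMonoid F] (β : ι → κ) (w : κ → F) : Matrix ι ι F :=
  diagonal fun m => ∑ p, blockAffinity β w m p

def blockLaplacian [AddCommGroup F] (β : ι → κ) (w : κ → F) : Matrix ι ι F :=
  blockDegree β w - blockAffinity β w

theorem sum_blockAffinity_apply [Ring F] (β : ι → κ) (w : κ → F) (m : ι) :
    ∑ p, blockAffinity β w m p = ((#{p | β p = β m} : F) - 1) * w (β m) := by
  have hfilter : ({p | m ≠ p ∧ β m = β p} : Finset ι) = ({p | β p = β m} : Finset ι).erase m := by
    ext p
    simp [eq_comm, and_comm]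
  simp only [blockAffinity, of_apply]
  rw [← sum_filter, sum_const, hfilter, card_erase_of_mem (by simp), nsmul_eq_mul,
    Nat.cast_sub (card_pos.2 ⟨m, by simp⟩), Nat.cast_one]

theorem blockDegree_eq_diagonal [Ring F] (β : ι → κ) (w : κ → F) :
    blockDegree β w = diagonal fun m => ((#{p | β p = β m} : F) - 1) * w (β m) := by
  simp only [blockDegree, sum_blockAffinity_apply]

variable [Field F] [CharZero F] {β : ι → κ} {w : κ → F}

theorem isUnit_blockDegree (hsize : ∀ i, 2 ≤ #{m | β m = i}) (hw : ∀ i, w i ≠ 0) :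
    IsUnit (blockDegree β w) := by
  rw [blockDegree_eq_diagonal, isUnit_diagonal, Pi.isUnit_iff]
  exact fun m => (mul_ne_zero (card_fiber_sub_one_ne_zero hsize _) (hw _)).isUnit

theorem inv_blockDegree (hsize : ∀ i, 2 ≤ #{m | β m = i}) (hw : ∀ i, w i ≠ 0) :
    (blockDegree β w)⁻¹ = diagonal fun m => (((#{p | β p = β m} : F) - 1) * w (β m))⁻¹ := by
  refine inv_eq_left_inv ?_
  rw [blockDegree_eq_diagonal, diagonal_mul_diagonal, ← diagonal_one]
  exact congrArg diagonal <| funext fun m =>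
    inv_mul_cancel₀ (mul_ne_zero (card_fiber_sub_one_ne_zero hsize _) (hw _))

theorem inv_blockDegree_mul_blockLaplacian (hsize : ∀ i, 2 ≤ #{m | β m = i})
    (hw : ∀ i, w i ≠ 0) :
    (blockDegree β w)⁻¹ * blockLaplacian β w = of fun m p =>
      if β m = β p then (if m = p then 1 else -((#{q | β q = β m} : F) - 1)⁻¹) else 0 := by
  ext m p
  rw [blockLaplacian, inv_blockDegree hsize hw, blockDegree_eq_diagonal, diagonal_mul,
    Matrix.sub_apply]
  by_cases hmp : m = p
  · subst hmp
    simp only [diagonal_apply_eq, blockAffinity, of_apply, ne_eq, not_true_eq_false, false_and,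
      if_false, if_true, sub_zero]
    exact inv_mul_cancel₀ (mul_ne_zero (card_fiber_sub_one_ne_zero hsize _) (hw _))
  · by_cases hb : β m = β p
    · simp only [hb, _root_.mul_inv_rev, ne_eq, hmp, not_false_eq_true, diagonal_apply_ne,
        blockAffinity, of_apply, and_self, ↓reduceIte, zero_sub, mul_neg, neg_inj]
      field_simp [hw (β p)]
    · simp [blockAffinity, hmp, hb]

end BlockAffinity

theorem charpoly_inv_blockDegree_mul_blockLaplacian {ι κ F : Type*} [Fintype ι] [DecidableEq ι]
    [Fintype κ] [LinearOrder κ] [Field F] [CharZero F] {β : ι → κ} {w : κ → F}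
    (hsize : ∀ i, 2 ≤ #{m | β m = i}) (hw : ∀ i, w i ≠ 0) :
    ((blockDegree β w)⁻¹ * blockLaplacian β w).charpoly =
      ∏ i, (X - C ((#{m | β m = i} : F) / (#{m | β m = i} - 1))) ^ (#{m | β m = i} - 1) * X := by
  have hβ : Function.Surjective β := fun i => by
    obtain ⟨m, hm⟩ := card_pos.1 ((hsize i).trans_lt' two_pos)
    exact ⟨m, (mem_filter.1 hm).2⟩
  rw [inv_blockDegree_mul_blockLaplacian hsize hw]
  refine (charpoly_of_blockwise_ite_eq β hβ (fun _ => 1)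
    fun i => -((#{m | β m = i} : F) - 1)⁻¹).trans (prod_congr rfl fun i _ => ?_)
  have heig : (1 : F) - -((#{m | β m = i} : F) - 1)⁻¹ = #{m | β m = i} / (#{m | β m = i} - 1) := by
    field_simp [card_fiber_sub_one_ne_zero hsize i]
    ring
  rw [heig, div_eq_mul_inv, mul_neg, add_neg_cancel, C_0, sub_zero]

theorem target_generalized_eigenvalues_general
    (K : ℕ)
    (n : Fin K → ℕ) (hn : ∀ i, 2 ≤ n i)
    (w : Fin K → ℝ) (hw : ∀ i, 0 < w i)
    (N : ℕ) (hN : N = ∑ i, n i)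
    (β : Fin N → Fin K)
    (hβ : ∀ m : Fin N,
      (∑ k ∈ Finset.univ.filter (fun k => k < β m), n k) ≤ m.val ∧
      m.val < (∑ k ∈ Finset.univ.filter (fun k => k < β m), n k) + n (β m))
    (W : Matrix (Fin N) (Fin N) ℝ)
    (hW : ∀ m p, W m p = if m ≠ p ∧ β m = β p then w (β m) else 0)
    (D : Matrix (Fin N) (Fin N) ℝ)
    (hD : D = Matrix.diagonal (fun m => ∑ p, W m p))
    (L : Matrix (Fin N) (Fin N) ℝ)
    (hL : L = D - W) :
    IsUnit D ∧
    (D⁻¹ * L).charpoly =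
      Polynomial.X ^ K *
        ∏ i, (Polynomial.X - Polynomial.C ((n i : ℝ) / ((n i : ℝ) - 1))) ^ (n i - 1) := by
  have hcard : ∀ i, #{m | β m = i} = n i :=
    card_fiber_eq_of_mem_Ico β Fin.val Fin.val_injective (fun i => ∑ k with k < i, n k) n
      (by rw [Fintype.card_fin, hN]) fun m => mem_Ico.2 (hβ m)
  have hsize : ∀ i, 2 ≤ #{m | β m = i} := fun i => hcard i ▸ hn i
  have hw' : ∀ i, w i ≠ 0 := fun i => (hw i).ne'
  obtain rfl : W = blockAffinity β w := Matrix.ext hW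
  subst hD hL
  refine ⟨isUnit_blockDegree hsize hw', ?_⟩
  refine (charpoly_inv_blockDegree_mul_blockLaplacian hsize hw').trans ?_
  rw [prod_mul_distrib, Fin.prod_const, mul_comm]
  simp only [hcard]

/-- For the target block diagonal affinity matrix `W`, the matrix `D` is
invertible and the characteristic polynomial of `D⁻¹ * L` equals
`X ^ K * ∏ i, (X - C (n i / (n i - 1))) ^ (n i - 1)`; equivalently the generalized
eigenvalues of the pair `(L, D)`, counted with multiplicity, consist of `K` zeros together
with, for each block `i`, the value `n i / (n i - 1)` repeated `n i - 1` times. -/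
theorem target_generalized_eigenvalues
    (K : ℕ) (hK : 1 ≤ K)
    (n : Fin K → ℕ) (hn : ∀ i, 2 ≤ n i)
    (w : Fin K → ℝ) (hw : ∀ i, 0 < w i)
    (N : ℕ) (hN : N = ∑ i, n i)
    (β : Fin N → Fin K)
    (hβ : ∀ m : Fin N,
      (∑ k ∈ Finset.univ.filter (fun k => k < β m), n k) ≤ m.val ∧
      m.val < (∑ k ∈ Finset.univ.filter (fun k => k < β m), n k) + n (β m))
    (W : Matrix (Fin N) (Fin N) ℝ)
    (hW : ∀ m p, W m p = if m ≠ p ∧ β m = β p then w (β m) else 0)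
    (D : Matrix (Fin N) (Fin N) ℝ)
    (hD : D = Matrix.diagonal (fun m => ∑ p, W m p))
    (L : Matrix (Fin N) (Fin N) ℝ)
    (hL : L = D - W) :
    IsUnit D ∧
    (D⁻¹ * L).charpoly =
      Polynomial.X ^ K *
        ∏ i, (Polynomial.X - Polynomial.C ((n i : ℝ) / ((n i : ℝ) - 1))) ^ (n i - 1) :=
  target_generalized_eigenvalues_general K n hn w hw N hN β hβ W hW D hD L hL
end

section
/- For the Type II outlier-corrupted affinity matrix W̃ and each j = 1, …, K, the value (N_j w_j + w̃_j)/d̃_j is a generalized eigenvalue of the pair (L̃, D̃) with geometric multiplicity at least N_j − 1; that is, the kernel of L̃ − ((N_j w_j + w̃_j)/d̃_j) D̃ has dimension at least N_j − 1. -/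
/-!
Put `λ = (N_j w_j + w̃_j) / d̃_j` and `M = L̃ - λ D̃ = (1 - λ) D̃ - W̃`. Swapping two points of
block `j` is a symmetry of `W̃`, hence of `M`; and `λ` is exactly the value for which the
diagonal entry `(1 - λ) d̃_j` of `M` at a block-`j` point equals the within-block entry `-w_j`.
Together these make all `N_j` columns of `M` indexed by block `j` equal, so `e_b - e_c` lies in
the kernel for any two such points `b, c`, which gives `N_j - 1` independent kernel vectors.
-/

open Finset Module

namespace Matrix

variable {ι : Type*} [DecidableEq ι]

theorem card_sub_one_le_finrank_ker_of_col_eq {K m : Type*} [Field K] [Fintype ι]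
    (M : Matrix m ι K) (S : Finset ι)
    (hS : ∀ b ∈ S, ∀ c ∈ S, M.col b = M.col c) :
    #S - 1 ≤ finrank K (LinearMap.ker M.toLin') := by
  rcases S.eq_empty_or_nonempty with rfl | ⟨q, hq⟩
  · simp
  let v : S.erase q → ι → K := fun b => Pi.single b.1 1 - Pi.single q 1
  have hv_ker : Submodule.span K (Set.range v) ≤ LinearMap.ker M.toLin' := by
    rw [Submodule.span_le]
    rintro _ ⟨⟨b, hb⟩, rfl⟩
    simp [v, toLin'_apply, mulVec_sub, hS b (mem_of_mem_erase hb) q hq]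
  -- Forgetting the coordinates outside `S.erase q` sends `v` to the standard basis.
  have hv_li : LinearIndependent K v := by
    refine LinearIndependent.of_comp (LinearMap.funLeft K K ((↑) : S.erase q → ι)) ?_
    convert (Pi.basisFun K (S.erase q)).linearIndependent using 1
    ext b x
    have hxq : (x : ι) ≠ q := ne_of_mem_erase x.2
    simp only [Function.comp_apply, LinearMap.funLeft_apply, Pi.basisFun_apply, v, Pi.sub_apply,
      Pi.single_apply, if_neg hxq, sub_zero, Subtype.ext_iff]
  calc #S - 1 = Fintype.card (S.erase q) := by rw [Fintype.card_coe, card_erase_of_mem hq]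
    _ = finrank K (Submodule.span K (Set.range v)) := (finrank_span_eq_card hv_li).symm
    _ ≤ _ := Submodule.finrank_mono hv_ker

theorem col_eq_of_submatrix_swap_eq {R : Type*} (M : Matrix ι ι R) {b c : ι}
    (hM : M.submatrix (Equiv.swap b c) (Equiv.swap b c) = M) (hbb : M b b = M c b) :
    M.col b = M.col c := by
  have hσ : ∀ x y, M (Equiv.swap b c x) (Equiv.swap b c y) = M x y := congrFun₂ hM
  ext x
  simp only [col_apply]
  rcases eq_or_ne x b with rfl | hxb
  · simpa using hbb.trans (hσ c x).symm
  rcases eq_or_ne x c with rfl | hxc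
  · exact hbb.symm.trans (by simpa using hσ x x)
  · simpa [Equiv.swap_apply_of_ne_of_ne hxb hxc] using hσ x c

theorem submatrix_diagonal_rowSum_eq {R : Type*} [AddCommMonoid R] [Fintype ι] (W : Matrix ι ι R)
    (σ : Equiv.Perm ι) (hW : W.submatrix σ σ = W) :
    (diagonal fun x => ∑ y, W x y).submatrix σ σ = diagonal fun x => ∑ y, W x y := by
  rw [submatrix_diagonal_equiv]
  congr 1
  ext x
  simp only [Function.comp_apply]
  rw [← Equiv.sum_comp σ]
  exact sum_congr rfl fun y _ => congrFun₂ hW x y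

end Matrix

theorem card_fiber_eq_of_mem_Ico {ι : Type*} [Fintype ι] [DecidableEq ι] {N : ℕ}
    (f : Fin N → ι) (n ℓ : ι → ℕ) (hN : N = ∑ i, n i)
    (hf : ∀ m : Fin N, ℓ (f m) ≤ m ∧ m < ℓ (f m) + n (f m)) (i : ι) :
    #{m | f m = i} = n i := by
  have hle : ∀ i ∈ univ, #{m | f m = i} ≤ n i := by
    intro i _
    calc #{m | f m = i} ≤ #(Ico (ℓ i) (ℓ i + n i)) := by
          refine card_le_card_of_injOn Fin.val ?_ Fin.val_injective.injOn
          intro m hm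
          simp only [coe_filter, mem_univ, true_and, Set.mem_ofPred_eq] at hm
          simpa [← hm] using hf m
      _ = n i := by simp
  have hsum : ∑ i, #{m | f m = i} = ∑ i, n i := by
    rw [← hN, ← card_eq_sum_card_fiberwise (fun _ _ => mem_univ _), card_univ,
      Fintype.card_fin]
  exact (sum_eq_sum_iff_of_le hle).1 hsum i (mem_univ i)

section BlockAffinity

variable {K N : ℕ} {w wt : Fin K → ℝ} {β : Fin N → Fin K} {W : Matrix (Fin N) (Fin N) ℝ}
  {Wt : Matrix (Fin (N + 1)) (Fin (N + 1)) ℝ}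

theorem blockAffinity_submatrix_eq
    (hW : ∀ m p, W m p = if m ≠ p ∧ β m = β p then w (β m) else 0)
    (σ : Equiv.Perm (Fin N)) (hσ : ∀ a, β (σ a) = β a) : W.submatrix σ σ = W := by
  ext a a'
  simp [hW, hσ, σ.injective.ne_iff]

theorem outlierAffinity_submatrix_swap_eq
    (hW : ∀ m p, W m p = if m ≠ p ∧ β m = β p then w (β m) else 0)
    (hWt1 : ∀ a b : Fin N, Wt a.castSucc b.castSucc = W a b)
    (hWt2 : ∀ a : Fin N, Wt (Fin.last N) a.castSucc = wt (β a))
    (hWt3 : ∀ a : Fin N, Wt a.castSucc (Fin.last N) = wt (β a))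
    {b c : Fin N} (hbc : β b = β c) :
    Wt.submatrix (Equiv.swap b.castSucc c.castSucc) (Equiv.swap b.castSucc c.castSucc) = Wt := by
  have hβ : ∀ a, β (Equiv.swap b c a) = β a := by
    intro a
    rw [Equiv.swap_apply_def]
    split_ifs <;> simp_all
  have hcast : ∀ a, Equiv.swap b.castSucc c.castSucc a.castSucc = (Equiv.swap b c a).castSucc :=
    (Fin.castSucc_injective N).swap_apply b c
  have hlast : Equiv.swap b.castSucc c.castSucc (Fin.last N) = Fin.last N :=
    Equiv.swap_apply_of_ne_of_ne (Fin.castSucc_ne_last b).symm (Fin.castSucc_ne_last c).symm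
  have hW_swap := congrFun₂ (blockAffinity_submatrix_eq hW _ hβ)
  ext x y
  induction x using Fin.lastCases <;> induction y using Fin.lastCases <;>
    simp_all

theorem outlierAffinity_rowSum
    (hW : ∀ m p, W m p = if m ≠ p ∧ β m = β p then w (β m) else 0)
    (hWt1 : ∀ a b : Fin N, Wt a.castSucc b.castSucc = W a b)
    (hWt3 : ∀ a : Fin N, Wt a.castSucc (Fin.last N) = wt (β a)) (b : Fin N) :
    ∑ p, Wt b.castSucc p = ((#{a | β a = β b} : ℝ) - 1) * w (β b) + wt (β b) := by
  have hrow : ∑ a, W b a = #(Finset.erase {a | β a = β b} b) * w (β b) := by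
    have hfil :
        Finset.erase {a | β a = β b} b = univ.filter fun a => b ≠ a ∧ β b = β a := by
      ext a; simp [eq_comm, and_comm]
    rw [hfil, ← nsmul_eq_mul, ← sum_const, sum_filter]
    simp [hW]
  rw [Fin.sum_univ_castSucc]
  simp only [hWt1, hWt3, hrow]
  rw [card_erase_of_mem (by simp), Nat.cast_sub (card_pos.2 ⟨b, by simp⟩)]
  simp

end BlockAffinity

theorem typeII_generalized_eigenvalue_multiplicity_general
    (K : ℕ)
    (n : Fin K → ℕ) (hn : ∀ i, 2 ≤ n i)
    (w : Fin K → ℝ) (hw : ∀ i, 0 < w i)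
    (N : ℕ) (hN : N = ∑ i, n i)
    (β : Fin N → Fin K)
    (hβ : ∀ m : Fin N,
      (∑ k ∈ Finset.univ.filter (fun k => k < β m), n k) ≤ m.val ∧
      m.val < (∑ k ∈ Finset.univ.filter (fun k => k < β m), n k) + n (β m))
    (W : Matrix (Fin N) (Fin N) ℝ)
    (hW : ∀ m p, W m p = if m ≠ p ∧ β m = β p then w (β m) else 0)
    (wt : Fin K → ℝ) (hwt : ∀ j, 0 < wt j)
    (Wt : Matrix (Fin (N + 1)) (Fin (N + 1)) ℝ)
    (hWt1 : ∀ a b : Fin N, Wt a.castSucc b.castSucc = W a b)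
    (hWt2 : ∀ a : Fin N, Wt (Fin.last N) a.castSucc = wt (β a))
    (hWt3 : ∀ a : Fin N, Wt a.castSucc (Fin.last N) = wt (β a))
    (Dt : Matrix (Fin (N + 1)) (Fin (N + 1)) ℝ)
    (hDt : Dt = Matrix.diagonal (fun m => ∑ p, Wt m p))
    (Lt : Matrix (Fin (N + 1)) (Fin (N + 1)) ℝ)
    (hLt : Lt = Dt - Wt)
    (dt : Fin K → ℝ)
    (hdt : ∀ j, dt j = ((n j : ℝ) - 1) * w j + wt j) :
    ∀ j : Fin K,
      n j - 1 ≤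
        Module.finrank ℝ
          ↥(LinearMap.ker
            (Matrix.toLin' (Lt - (((n j : ℝ) * w j + wt j) / dt j) • Dt))) := by
  intro j
  set μ := ((n j : ℝ) * w j + wt j) / dt j
  set S := ({b | β b = j} : Finset (Fin N)).map Fin.castSuccEmb
  have hcard : #{b | β b = j} = n j :=
    card_fiber_eq_of_mem_Ico β n (fun i => ∑ k with k < i, n k) hN hβ j
  have hμ : (1 - μ) * dt j = -w j := by
    have hdt_pos : 0 < dt j := by
      have : (2 : ℝ) ≤ n j := by exact_mod_cast hn j
      rw [hdt]; nlinarith [hw j, hwt j]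
    have : μ * dt j = n j * w j + wt j := div_mul_cancel₀ _ hdt_pos.ne'
    linear_combination hdt j - this
  have hcol : ∀ b ∈ S, ∀ c ∈ S, (Lt - μ • Dt).col b = (Lt - μ • Dt).col c := by
    simp only [S, mem_map, mem_filter, mem_univ, true_and, Fin.coe_castSuccEmb]
    rintro _ ⟨b, hb, rfl⟩ _ ⟨c, hc, rfl⟩
    rcases eq_or_ne b c with rfl | hbc
    · rfl
    have hWt_swap := outlierAffinity_submatrix_swap_eq hW hWt1 hWt2 hWt3 (hb.trans hc.symm)
    refine Matrix.col_eq_of_submatrix_swap_eq _ ?_ ?_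
    · subst hLt hDt
      simp [Matrix.submatrix_sub, Matrix.submatrix_smul, hWt_swap,
        Matrix.submatrix_diagonal_rowSum_eq _ _ hWt_swap]
    · have hrow := outlierAffinity_rowSum hW hWt1 hWt3 b
      calc (Lt - μ • Dt) b.castSucc b.castSucc = (1 - μ) * dt j := by
            simp [hLt, hDt, hrow, hb, hcard, hWt1, hW, hdt]; ring
        _ = -w j := hμ
        _ = (Lt - μ • Dt) c.castSucc b.castSucc := by
            simp [hLt, hDt, hWt1, hW, hbc.symm, hb, hc]
  simpa [S, hcard] using Matrix.card_sub_one_le_finrank_ker_of_col_eq _ S hcol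

/-- For the Type II outlier-corrupted affinity matrix `W̃` and each block `j`,
the value `(n j * w j + w̃ j) / d̃ j` is a generalized eigenvalue of the pair `(L̃, D̃)` with
geometric multiplicity at least `n j - 1`; that is, the kernel of
`L̃ - ((n j * w j + w̃ j) / d̃ j) • D̃` has dimension at least `n j - 1`. -/
theorem typeII_generalized_eigenvalue_multiplicity
    (K : ℕ) (hK : 1 ≤ K)
    (n : Fin K → ℕ) (hn : ∀ i, 2 ≤ n i)
    (w : Fin K → ℝ) (hw : ∀ i, 0 < w i)
    (N : ℕ) (hN : N = ∑ i, n i)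
    (β : Fin N → Fin K)
    (hβ : ∀ m : Fin N,
      (∑ k ∈ Finset.univ.filter (fun k => k < β m), n k) ≤ m.val ∧
      m.val < (∑ k ∈ Finset.univ.filter (fun k => k < β m), n k) + n (β m))
    (W : Matrix (Fin N) (Fin N) ℝ)
    (hW : ∀ m p, W m p = if m ≠ p ∧ β m = β p then w (β m) else 0)
    (wt : Fin K → ℝ) (hwt : ∀ j, 0 < wt j)
    (Wt : Matrix (Fin (N + 1)) (Fin (N + 1)) ℝ)
    (hWt1 : ∀ a b : Fin N, Wt a.castSucc b.castSucc = W a b)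
    (hWt2 : ∀ a : Fin N, Wt (Fin.last N) a.castSucc = wt (β a))
    (hWt3 : ∀ a : Fin N, Wt a.castSucc (Fin.last N) = wt (β a))
    (hWt4 : Wt (Fin.last N) (Fin.last N) = 0)
    (Dt : Matrix (Fin (N + 1)) (Fin (N + 1)) ℝ)
    (hDt : Dt = Matrix.diagonal (fun m => ∑ p, Wt m p))
    (Lt : Matrix (Fin (N + 1)) (Fin (N + 1)) ℝ)
    (hLt : Lt = Dt - Wt)
    (dt : Fin K → ℝ)
    (hdt : ∀ j, dt j = ((n j : ℝ) - 1) * w j + wt j) :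
    ∀ j : Fin K,
      n j - 1 ≤
        Module.finrank ℝ
          ↥(LinearMap.ker
            (Matrix.toLin' (Lt - (((n j : ℝ) * w j + wt j) / dt j) • Dt))) :=
  typeII_generalized_eigenvalue_multiplicity_general K n hn w hw N hN β hβ W hW wt hwt Wt hWt1 hWt2
    hWt3 Dt hDt Lt hLt dt hdt
end

section
/- For the Type II outlier-corrupted affinity matrix W̃: 0 is a generalized eigenvalue of the pair (L̃, D̃), and every real generalized eigenvalue λ of (L̃, D̃) satisfies λ = 0, or λ = (N_j w_j + w̃_j)/d̃_j for some j ∈ {1, …, K}, or Σ_{j=1}^{K} N_j w̃_j d̃_j ∏_{k≠j} (w̃_k − λ d̃_k) + d̃_II ∏_{k=1}^{K} (w̃_k − λ d̃_k) = 0. -/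
lemma fiber_card {K N : ℕ} (n : Fin K → ℕ) (hN : N = ∑ i, n i) (β : Fin N → Fin K)
    (hβ : ∀ m : Fin N,
      (∑ k ∈ Finset.univ.filter (fun k => k < β m), n k) ≤ m.val ∧
      m.val < (∑ k ∈ Finset.univ.filter (fun k => k < β m), n k) + n (β m)) (i : Fin K) :
    (Finset.univ.filter fun a : Fin N => β a = i).card = n i := by
  set off : Fin K → ℕ := fun j => ∑ k ∈ Finset.univ.filter (fun k => k < j), n k with hoff
  have mono : ∀ j i : Fin K, j < i → off j + n j ≤ off i := by
    intro j i hji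
    have hsub : insert j (Finset.univ.filter (fun k => k < j)) ⊆
        Finset.univ.filter (fun k => k < i) := by
      intro k hk
      simp only [Finset.mem_insert, Finset.mem_filter, Finset.mem_univ, true_and] at hk ⊢
      rcases hk with rfl | hk
      · exact hji
      · exact hk.trans hji
    have hnm : j ∉ Finset.univ.filter (fun k => k < j) := by simp
    calc off j + n j = ∑ k ∈ insert j (Finset.univ.filter (fun k => k < j)), n k := by
          rw [Finset.sum_insert hnm]; ring
      _ ≤ off i := Finset.sum_le_sum_of_subset hsub
  have hub : ∀ j : Fin K, off j + n j ≤ N := by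
    intro j
    have hnm : j ∉ Finset.univ.filter (fun k => k < j) := by simp
    calc off j + n j = ∑ k ∈ insert j (Finset.univ.filter (fun k => k < j)), n k := by
          rw [Finset.sum_insert hnm]; ring
      _ ≤ ∑ k, n k := Finset.sum_le_sum_of_subset (Finset.subset_univ _)
      _ = N := hN.symm
  have hiff : ∀ a : Fin N, β a = i ↔ off i ≤ a.val ∧ a.val < off i + n i := by
    intro a
    have h3 : off (β a) ≤ a.val ∧ a.val < off (β a) + n (β a) := hβ a
    constructor
    · rintro rfl; exact h3
    · rintro ⟨h1, h2⟩
      by_contra hne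
      rcases lt_or_gt_of_ne hne with hlt | hgt
      · have := mono _ _ hlt
        omega
      · have := mono _ _ hgt
        omega
  have key : (Finset.univ.filter fun a : Fin N => β a = i).card =
      (Finset.Ico (off i) (off i + n i)).card := by
    apply Finset.card_bij' (i := fun a _ => (a : Fin N).val)
      (j := fun x hx => (⟨x, by simp only [Finset.mem_Ico] at hx; have := hub i; omega⟩ : Fin N))
    case hi =>
      intro a ha
      simp only [Finset.mem_filter, Finset.mem_univ, true_and] at ha
      have h4 := (hiff a).mp ha
      simp [Finset.mem_Ico, h4.1, h4.2]
    case hj =>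
      intro x hx
      simp only [Finset.mem_Ico] at hx
      simp only [Finset.mem_filter, Finset.mem_univ, true_and]
      exact (hiff _).mpr ⟨hx.1, hx.2⟩
    case left_inv => intro a ha; rfl
    case right_inv => intro x hx; rfl
  rw [key, Nat.card_Ico]
  omega

/-- For the Type II outlier-corrupted affinity matrix `W̃`: `0` is a generalized
eigenvalue of the pair `(L̃, D̃)`, and every real generalized eigenvalue `λ` of `(L̃, D̃)`
satisfies `λ = 0`, or `λ = (n j * w j + w̃ j) / d̃ j` for some `j`, or
`∑ j, n j * w̃ j * d̃ j * ∏_{k ≠ j} (w̃ k - λ * d̃ k) + d̃_II * ∏ k, (w̃ k - λ * d̃ k) = 0`. -/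
theorem typeII_generalized_eigenvalues_characterization
    (K : ℕ) (hK : 1 ≤ K)
    (n : Fin K → ℕ) (hn : ∀ i, 2 ≤ n i)
    (w : Fin K → ℝ) (hw : ∀ i, 0 < w i)
    (N : ℕ) (hN : N = ∑ i, n i)
    (β : Fin N → Fin K)
    (hβ : ∀ m : Fin N,
      (∑ k ∈ Finset.univ.filter (fun k => k < β m), n k) ≤ m.val ∧
      m.val < (∑ k ∈ Finset.univ.filter (fun k => k < β m), n k) + n (β m))
    (W : Matrix (Fin N) (Fin N) ℝ)
    (hW : ∀ m p, W m p = if m ≠ p ∧ β m = β p then w (β m) else 0)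
    (wt : Fin K → ℝ) (hwt : ∀ j, 0 < wt j)
    (Wt : Matrix (Fin (N + 1)) (Fin (N + 1)) ℝ)
    (hWt1 : ∀ a b : Fin N, Wt a.castSucc b.castSucc = W a b)
    (hWt2 : ∀ a : Fin N, Wt (Fin.last N) a.castSucc = wt (β a))
    (hWt3 : ∀ a : Fin N, Wt a.castSucc (Fin.last N) = wt (β a))
    (hWt4 : Wt (Fin.last N) (Fin.last N) = 0)
    (Dt : Matrix (Fin (N + 1)) (Fin (N + 1)) ℝ)
    (hDt : Dt = Matrix.diagonal (fun m => ∑ p, Wt m p))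
    (Lt : Matrix (Fin (N + 1)) (Fin (N + 1)) ℝ)
    (hLt : Lt = Dt - Wt)
    (dt : Fin K → ℝ)
    (hdt : ∀ j, dt j = ((n j : ℝ) - 1) * w j + wt j)
    (dII : ℝ) (hdII : dII = ∑ j, (n j : ℝ) * wt j) :
    (Lt - (0 : ℝ) • Dt).det = 0 ∧
    ∀ lam : ℝ, (Lt - lam • Dt).det = 0 →
      lam = 0 ∨
      (∃ j : Fin K, lam = ((n j : ℝ) * w j + wt j) / dt j) ∨
      (∑ j, (n j : ℝ) * wt j * dt j *
          ∏ k ∈ Finset.univ.erase j, (wt k - lam * dt k)) +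
        dII * ∏ k, (wt k - lam * dt k) = 0 := by
  constructor
  case left =>
    rw [zero_smul, sub_zero]
    rw [← Matrix.exists_mulVec_eq_zero_iff]
    refine ⟨fun _ => 1, ?_, ?_⟩
    · intro h
      have := congrFun h (Fin.last N)
      simpa using this
    · funext q
      simp only [Matrix.mulVec, dotProduct, hLt, Matrix.sub_apply, mul_one, Pi.zero_apply]
      rw [Finset.sum_sub_distrib]
      have h1 : ∑ x, Dt q x = ∑ x, Wt q x := by
        rw [hDt]
        simp only [Matrix.diagonal_apply]
        rw [Finset.sum_ite_eq]
        simp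
      rw [h1, sub_self]
  case right =>
    have hcard : ∀ i, (Finset.univ.filter fun a : Fin N => β a = i).card = n i :=
      fiber_card n hN β hβ
    have hdtpos : ∀ i, 0 < dt i := by
      intro i
      rw [hdt]
      have h1 : (2 : ℝ) ≤ (n i : ℝ) := by exact_mod_cast hn i
      nlinarith [hw i, hwt i]
    -- fiberwise sum for functions factoring through β times arbitrary vector
    have hfib : ∀ u : Fin N → ℝ,
        ∑ a, u a = ∑ i, ∑ a ∈ Finset.univ.filter (fun a => β a = i), u a :=
      fun u => (Finset.sum_fiberwise _ _ _).symm
    have hconstface : ∀ (i : Fin K) (g : Fin K → ℝ),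
        ∑ a ∈ Finset.univ.filter (fun a : Fin N => β a = i), g (β a) = (n i : ℝ) * g i := by
      intro i g
      rw [Finset.sum_congr rfl (fun a ha => by
        simp only [Finset.mem_filter, Finset.mem_univ, true_and] at ha
        rw [ha])]
      rw [Finset.sum_const, hcard, nsmul_eq_mul]
    -- row sums of Wt
    have hfiltereq : ∀ m : Fin N, (Finset.univ.filter fun a : Fin N => m ≠ a ∧ β m = β a) =
        (Finset.univ.filter fun a : Fin N => β a = β m).erase m := by
      intro m
      ext a
      simp only [Finset.mem_filter, Finset.mem_univ, true_and, Finset.mem_erase]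
      constructor
      · rintro ⟨h1, h2⟩; exact ⟨Ne.symm h1, h2.symm⟩
      · rintro ⟨h1, h2⟩; exact ⟨Ne.symm h1, h2.symm⟩
    have hmem : ∀ m : Fin N, m ∈ (Finset.univ.filter fun a : Fin N => β a = β m) := by
      intro m; simp
    have hWsum : ∀ m : Fin N, ∑ a, W m a = ((n (β m) : ℝ) - 1) * w (β m) := by
      intro m
      simp only [hW]
      rw [← Finset.sum_filter, hfiltereq, Finset.sum_const,
        Finset.card_erase_of_mem (hmem m), hcard, nsmul_eq_mul]
      have h2 : 1 ≤ n (β m) := le_trans one_le_two (hn (β m))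
      push_cast [Nat.cast_sub h2]
      ring
    have hrs1 : ∀ m : Fin N, (∑ p, Wt m.castSucc p) = dt (β m) := by
      intro m
      rw [Fin.sum_univ_castSucc]
      simp only [hWt1, hWt3]
      rw [hWsum m, hdt]
    have hrs2 : (∑ p, Wt (Fin.last N) p) = dII := by
      rw [Fin.sum_univ_castSucc]
      simp only [hWt2, hWt4, add_zero]
      rw [hfib (fun a => wt (β a)), hdII]
      exact Finset.sum_congr rfl fun i _ => hconstface i wt
    intro lam hdet
    by_cases hlam0 : lam = 0
    · left; exact hlam0
    by_cases hmu : ∃ i, (1 - lam) * dt i + w i = 0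
    · right; left
      obtain ⟨i, hi⟩ := hmu
      refine ⟨i, ?_⟩
      rw [eq_div_iff (ne_of_gt (hdtpos i))]
      linear_combination (-1 : ℝ) * hi + hdt i
    push_neg at hmu
    right; right
    obtain ⟨v, hv0, hv⟩ := Matrix.exists_mulVec_eq_zero_iff.mpr hdet
    set vl : ℝ := v (Fin.last N) with hvl_def
    -- row equations
    have hveq : ∀ q, (1 - lam) * (∑ pp, Wt q pp) * v q = ∑ x, Wt q x * v x := by
      intro q
      have h0 := congrFun hv q
      simp only [Matrix.mulVec, dotProduct, Pi.zero_apply, Matrix.sub_apply,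
        Matrix.smul_apply, hLt, smul_eq_mul] at h0
      have h1 : ∑ x, (Dt q x - Wt q x - lam * Dt q x) * v x = 0 := h0
      have h2 : ∑ x, ((1 - lam) * Dt q x * v x - Wt q x * v x) = 0 := by
        rw [← h1]; exact Finset.sum_congr rfl fun x _ => by ring
      rw [Finset.sum_sub_distrib] at h2
      have h3 : ∑ x, (1 - lam) * Dt q x * v x = (1 - lam) * (∑ pp, Wt q pp) * v q := by
        rw [hDt]
        simp only [Matrix.diagonal_apply]
        rw [Finset.sum_eq_single q]
        · simp
        · intro x _ hx; simp [Ne.symm hx]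
        · simp
      rw [h3] at h2
      linarith
    obtain ⟨S, hS_def⟩ : ∃ S : Fin K → ℝ, ∀ i, S i =
        ∑ a ∈ Finset.univ.filter (fun a : Fin N => β a = i), v a.castSucc :=
      ⟨_, fun i => rfl⟩
    have hrowm : ∀ m : Fin N, ((1 - lam) * dt (β m) + w (β m)) * v m.castSucc =
        w (β m) * S (β m) + wt (β m) * vl := by
      intro m
      have h0 := hveq m.castSucc
      rw [hrs1 m, Fin.sum_univ_castSucc] at h0
      simp only [hWt1, hWt3] at h0
      have h1 : ∑ a : Fin N, W m a * v a.castSucc =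
          w (β m) * (S (β m) - v m.castSucc) := by
        simp only [hW, ite_mul, zero_mul]
        rw [← Finset.sum_filter, hfiltereq, ← Finset.mul_sum,
          Finset.sum_erase_eq_sub (hmem m), hS_def]
      rw [h1] at h0
      linarith
    have hrowlast : (1 - lam) * dII * vl = ∑ a : Fin N, wt (β a) * v a.castSucc := by
      have h0 := hveq (Fin.last N)
      rw [hrs2, Fin.sum_univ_castSucc (f := fun x => Wt (Fin.last N) x * v x)] at h0
      simp only [hWt2, hWt4, zero_mul, add_zero] at h0
      exact h0
    -- block constancy
    have hmune : ∀ i, (1 - lam) * dt i + w i ≠ 0 := hmu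
    obtain ⟨c, hc_def⟩ : ∃ c : Fin K → ℝ, ∀ i,
        c i = (w i * S i + wt i * vl) / ((1 - lam) * dt i + w i) := ⟨_, fun i => rfl⟩
    have hvc : ∀ m : Fin N, v m.castSucc = c (β m) := by
      intro m
      rw [hc_def, eq_div_iff (hmune (β m))]
      linear_combination hrowm m
    have hSc : ∀ i, S i = (n i : ℝ) * c i := by
      intro i
      rw [hS_def]
      rw [Finset.sum_congr rfl (fun a ha => by
        simp only [Finset.mem_filter, Finset.mem_univ, true_and] at ha
        rw [hvc a, ha]), Finset.sum_const, hcard, nsmul_eq_mul]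
    have hblock : ∀ i : Fin K, ∃ m : Fin N, β m = i := by
      intro i
      have h1 : 0 < (Finset.univ.filter fun a : Fin N => β a = i).card := by
        rw [hcard]; have := hn i; omega
      obtain ⟨m, hm⟩ := Finset.card_pos.mp h1
      simp only [Finset.mem_filter, Finset.mem_univ, true_and] at hm
      exact ⟨m, hm⟩
    have hkey : ∀ i, (wt i - lam * dt i) * c i = wt i * vl := by
      intro i
      obtain ⟨m, rfl⟩ := hblock i
      have h0 := hrowm m
      rw [hvc m, hSc (β m)] at h0
      linear_combination h0 - c (β m) * hdt (β m)
    have hlastEq : (1 - lam) * dII * vl = ∑ i, (n i : ℝ) * (wt i * c i) := by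
      rw [hrowlast, hfib (fun a => wt (β a) * v a.castSucc)]
      refine Finset.sum_congr rfl fun i _ => ?_
      rw [Finset.sum_congr rfl (fun a ha => by
        simp only [Finset.mem_filter, Finset.mem_univ, true_and] at ha
        rw [hvc a, ha]), Finset.sum_const, hcard, nsmul_eq_mul]
    by_cases hvl : vl = 0
    · -- outlier coordinate zero
      have hpc : ∀ i, (wt i - lam * dt i) * c i = 0 := by
        intro i; rw [hkey i, hvl, mul_zero]
      have hex : ∃ i, c i ≠ 0 := by
        by_contra hc
        push_neg at hc
        apply hv0
        funext q
        refine Fin.lastCases ?_ ?_ q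
        · exact hvl
        · intro a; rw [hvc a, hc]; rfl
      obtain ⟨i, hci⟩ := hex
      have hpi : wt i - lam * dt i = 0 := by
        rcases mul_eq_zero.mp (hpc i) with h | h
        · exact h
        · exact absurd h hci
      by_cases h2 : ∃ j, j ≠ i ∧ wt j - lam * dt j = 0
      · obtain ⟨j, hji, hpj⟩ := h2
        have hprod : ∏ k, (wt k - lam * dt k) = 0 :=
          Finset.prod_eq_zero (Finset.mem_univ i) hpi
        have hterm : ∀ jj : Fin K,
            (n jj : ℝ) * wt jj * dt jj * ∏ k ∈ Finset.univ.erase jj, (wt k - lam * dt k) = 0 := by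
          intro jj
          rcases ne_or_eq jj i with h | rfl
          · rw [Finset.prod_eq_zero (Finset.mem_erase.mpr ⟨Ne.symm h, Finset.mem_univ i⟩) hpi,
              mul_zero]
          · rw [Finset.prod_eq_zero (Finset.mem_erase.mpr ⟨hji, Finset.mem_univ j⟩) hpj,
              mul_zero]
        rw [Finset.sum_congr rfl (fun jj _ => hterm jj), Finset.sum_const_zero, hprod,
          mul_zero, add_zero]
      · push_neg at h2
        exfalso
        have hcz : ∀ j, j ≠ i → c j = 0 := by
          intro j hj
          rcases mul_eq_zero.mp (hpc j) with h | h
          · exact absurd h (h2 j hj)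
          · exact h
        have h3 : (0 : ℝ) = (n i : ℝ) * (wt i * c i) := by
          have h4 := hlastEq
          rw [hvl, mul_zero] at h4
          rw [h4, Finset.sum_eq_single i]
          · intro j _ hj; rw [hcz j hj, mul_zero, mul_zero]
          · intro h; exact absurd (Finset.mem_univ i) h
        have hnpos : (0 : ℝ) < (n i : ℝ) := by
          have := hn i; positivity
        rcases mul_eq_zero.mp h3.symm with h | h
        · exact absurd h (ne_of_gt hnpos)
        · rcases mul_eq_zero.mp h with h | h
          · exact absurd h (ne_of_gt (hwt i))
          · exact hci h
    · -- outlier coordinate nonzero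
      have hpne : ∀ i, wt i - lam * dt i ≠ 0 := by
        intro i h
        have h0 := hkey i
        rw [h, zero_mul] at h0
        exact (mul_ne_zero (ne_of_gt (hwt i)) hvl) h0.symm
      have hcp : ∀ j, c j * ∏ k, (wt k - lam * dt k) =
          wt j * vl * ∏ k ∈ Finset.univ.erase j, (wt k - lam * dt k) := by
        intro j
        rw [← Finset.mul_prod_erase Finset.univ _ (Finset.mem_univ j)]
        linear_combination (∏ k ∈ Finset.univ.erase j, (wt k - lam * dt k)) * hkey j
      have hQ : ∑ j, (n j : ℝ) * wt j ^ 2 *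
          ∏ k ∈ Finset.univ.erase j, (wt k - lam * dt k) =
          (1 - lam) * dII * ∏ k, (wt k - lam * dt k) := by
        have h1 : vl * ∑ j, (n j : ℝ) * wt j ^ 2 *
            ∏ k ∈ Finset.univ.erase j, (wt k - lam * dt k) =
            vl * ((1 - lam) * dII * ∏ k, (wt k - lam * dt k)) := by
          rw [Finset.mul_sum]
          have h2 : ∀ j : Fin K, vl * ((n j : ℝ) * wt j ^ 2 *
              ∏ k ∈ Finset.univ.erase j, (wt k - lam * dt k)) =
              ((n j : ℝ) * (wt j * c j)) * ∏ k, (wt k - lam * dt k) := by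
            intro j
            linear_combination (-(n j : ℝ) * wt j) * hcp j
          rw [Finset.sum_congr rfl (fun j _ => h2 j), ← Finset.sum_mul, ← hlastEq]
          ring
        exact mul_left_cancel₀ hvl h1
      -- final computation
      have hfinal : lam * ((∑ j, (n j : ℝ) * wt j * dt j *
          ∏ k ∈ Finset.univ.erase j, (wt k - lam * dt k)) +
          dII * ∏ k, (wt k - lam * dt k)) = 0 := by
        have hterm : ∀ j : Fin K, lam * ((n j : ℝ) * wt j * dt j *
            ∏ k ∈ Finset.univ.erase j, (wt k - lam * dt k)) =
            (n j : ℝ) * wt j ^ 2 * ∏ k ∈ Finset.univ.erase j, (wt k - lam * dt k) -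
            (n j : ℝ) * wt j * ∏ k, (wt k - lam * dt k) := by
          intro j
          rw [← Finset.mul_prod_erase Finset.univ _ (Finset.mem_univ j)]
          ring
        rw [mul_add, Finset.mul_sum, Finset.sum_congr rfl (fun j _ => hterm j),
          Finset.sum_sub_distrib, hQ, ← Finset.sum_mul, ← hdII]
        ring
      rcases mul_eq_zero.mp hfinal with h | h
      · exact absurd h hlam0
      · exact h
end

section
/- For the group-similarity corrupted affinity matrix W̃, the value (N_i w_i + Σ_{j≠i} N_j w̃_{i,j})/d̃_i is a generalized eigenvalue of the pair (L̃, D̃) with geometric multiplicity at least N_i − 1; that is, the kernel of L̃ − ((N_i w_i + Σ_{j≠i} N_j w̃_{i,j})/d̃_i) D̃ has dimension at least N_i − 1. -/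
/-!
Put `λ = (n_i w_i + S) / d̃_i` with `S = ∑_{j ≠ i} n_j w̃_{i,j}`, so that `λ d̃_i = d̃_i + w_i`.
Every column of `L̃ - λ D̃` indexed by block `i` is the same vector `-r`, where `r_p = w_i` for
`p` in block `i` and `r_p = w̃_{i,β(p)}` otherwise: off the diagonal the entry is `-W̃`, and on the
diagonal it is `(1 - λ) d̃_i = -w_i`, because a row of block `i` sums to `d̃_i` once each block `j`
is known to have exactly `n_j` indices. Hence `e_m - e_{m₀}` lies in the kernel for all `m ≠ m₀`
in block `i`, which gives `n_i - 1` independent kernel vectors.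
-/

open Finset

theorem Matrix.card_sub_one_le_finrank_ker_toLin'_of_col_eq {κ ι K : Type*} [Fintype ι]
    [DecidableEq ι] [Field K] (A : Matrix κ ι K) (s : Finset ι)
    (hA : ∀ m ∈ s, ∀ m' ∈ s, A.col m = A.col m') :
    #s - 1 ≤ Module.finrank K (LinearMap.ker A.toLin') := by
  obtain rfl | ⟨m₀, hm₀⟩ := s.eq_empty_or_nonempty
  · simp
  have hker : ∀ m ∈ s, Pi.single m 1 - Pi.single m₀ 1 ∈ LinearMap.ker A.toLin' := fun m hm => by
    simp [Matrix.mulVec_sub, hA m hm m₀ hm₀]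
  let v : s.erase m₀ → LinearMap.ker A.toLin' := fun m =>
    ⟨Pi.single (m : ι) 1 - Pi.single m₀ 1, hker m (mem_of_mem_erase m.2)⟩
  -- restricted to the coordinates `s.erase m₀`, the vectors `v m` form the standard basis
  have hv : LinearIndependent K v := by
    refine LinearIndependent.of_comp
      ((LinearMap.funLeft K K ((↑) : s.erase m₀ → ι)).comp (LinearMap.ker A.toLin').subtype) ?_
    convert (Pi.basisFun K (s.erase m₀)).linearIndependent using 1
    ext m k
    simp [v, Pi.single_apply, ne_of_mem_erase k.2]
  simpa only [Fintype.card_coe, card_erase_of_mem hm₀] using hv.fintype_card_le_finrank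

theorem card_filter_le_of_val_mem_Ico {N : ℕ} {ι : Type*} [DecidableEq ι] (β : Fin N → ι)
    (o n : ι → ℕ) (hβ : ∀ m, o (β m) ≤ m.val ∧ m.val < o (β m) + n (β m)) (j : ι) :
    #{m | β m = j} ≤ n j := by
  have hmaps : ∀ m ∈ ({m | β m = j} : Finset (Fin N)), m.val ∈ Ico (o j) (o j + n j) := by
    intro m hm
    rw [mem_filter] at hm
    simpa [← hm.2] using hβ m
  simpa using card_le_card_of_injOn _ hmaps Fin.val_injective.injOn

theorem card_filter_eq_of_card_filter_le {α ι : Type*} [Fintype α] [Fintype ι] [DecidableEq ι]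
    (f : α → ι) (n : ι → ℕ) (hle : ∀ j, #{a | f a = j} ≤ n j)
    (hcard : Fintype.card α = ∑ j, n j) (j : ι) : #{a | f a = j} = n j :=
  (sum_eq_sum_iff_of_le fun j _ => hle j).1
    (by rw [← hcard, ← card_univ, card_eq_sum_card_fiberwise fun a _ => mem_univ (f a)])
    j (mem_univ j)

section CorruptedAffinity

variable {α ι : Type*} [DecidableEq α] [DecidableEq ι] {β : α → ι} {w wt : ι → ℝ}
  {i : ι} {W Wt : Matrix α α ℝ}

theorem corrupted_apply_left_of_block_eq
    (hW : ∀ m p, W m p = if m ≠ p ∧ β m = β p then w (β m) else 0)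
    (hWt : ∀ m p, Wt m p =
      if β m = β p then W m p else if β m = i then wt (β p) else if β p = i then wt (β m) else 0)
    {q : α} (hq : β q = i) (p : α) :
    Wt q p = (if β p = i then w i else wt (β p)) - if q = p then w i else 0 := by
  rw [hWt, hW]
  obtain rfl | hqp := eq_or_ne q p
  · simp [hq]
  obtain hp | hp := eq_or_ne (β p) i
  · simp [hq, hp, hqp]
  · simp [hq, hp, hqp, hp.symm]

theorem corrupted_apply_right_of_block_eq
    (hW : ∀ m p, W m p = if m ≠ p ∧ β m = β p then w (β m) else 0)
    (hWt : ∀ m p, Wt m p =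
      if β m = β p then W m p else if β m = i then wt (β p) else if β p = i then wt (β m) else 0)
    {q : α} (hq : β q = i) (p : α) :
    Wt p q = (if β p = i then w i else wt (β p)) - if p = q then w i else 0 := by
  rw [hWt, hW]
  obtain rfl | hpq := eq_or_ne p q
  · simp [hq]
  obtain hp | hp := eq_or_ne (β p) i <;> simp [hq, hp, hpq]

theorem sum_corrupted_row_of_block_eq [Fintype α] [Fintype ι] {n : ι → ℕ}
    (hW : ∀ m p, W m p = if m ≠ p ∧ β m = β p then w (β m) else 0)
    (hWt : ∀ m p, Wt m p =
      if β m = β p then W m p else if β m = i then wt (β p) else if β p = i then wt (β m) else 0)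
    (hcard : ∀ j, #{m | β m = j} = n j) {q : α} (hq : β q = i) :
    ∑ p, Wt q p = ((n i : ℝ) - 1) * w i + ∑ j ∈ univ.erase i, (n j : ℝ) * wt j := by
  rw [sum_congr rfl fun p _ => corrupted_apply_left_of_block_eq hW hWt hq p, sum_sub_distrib,
    sum_ite_eq, if_pos (mem_univ q),
    ← sum_fiberwise' univ β fun j => if j = i then w i else wt j]
  simp only [sum_const, hcard, nsmul_eq_mul]
  rw [← add_sum_erase _ _ (mem_univ i), if_pos rfl,
    sum_congr rfl fun j hj => by rw [if_neg (ne_of_mem_erase hj)]]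
  ring

theorem corrupted_laplacian_sub_smul_degree_apply_of_block_eq [Fintype α] {d : ℝ} (hd : d ≠ 0)
    (hW : ∀ m p, W m p = if m ≠ p ∧ β m = β p then w (β m) else 0)
    (hWt : ∀ m p, Wt m p =
      if β m = β p then W m p else if β m = i then wt (β p) else if β p = i then wt (β m) else 0)
    {q : α} (hq : β q = i) (hrow : ∑ p, Wt q p = d) (p : α) :
    (Matrix.diagonal (fun m => ∑ p, Wt m p) - Wt -
      ((d + w i) / d) • Matrix.diagonal (fun m => ∑ p, Wt m p)) p q =
      -if β p = i then w i else wt (β p) := by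
  rw [Matrix.sub_apply, Matrix.sub_apply, Matrix.smul_apply, Matrix.diagonal_apply,
    corrupted_apply_right_of_block_eq hW hWt hq]
  by_cases hpq : p = q
  · subst hpq
    simp only [if_true, hq, hrow, smul_eq_mul]
    field_simp
    ring
  · simp [hpq]

end CorruptedAffinity

theorem groupSim_generalized_eigenvalue_block_i_general
    (K : ℕ)
    (n : Fin K → ℕ)
    (w : Fin K → ℝ) (hw : ∀ i, 0 < w i)
    (N : ℕ) (hN : N = ∑ i, n i)
    (β : Fin N → Fin K)
    (hβ : ∀ m : Fin N,
      (∑ k ∈ Finset.univ.filter (fun k => k < β m), n k) ≤ m.val ∧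
      m.val < (∑ k ∈ Finset.univ.filter (fun k => k < β m), n k) + n (β m))
    (W : Matrix (Fin N) (Fin N) ℝ)
    (hW : ∀ m p, W m p = if m ≠ p ∧ β m = β p then w (β m) else 0)
    (i : Fin K)
    (wt : Fin K → ℝ) (hwt : ∀ j, j ≠ i → 0 < wt j)
    (Wt : Matrix (Fin N) (Fin N) ℝ)
    (hWt : ∀ m p, Wt m p =
      if β m = β p then W m p
      else if β m = i then wt (β p)
      else if β p = i then wt (β m)
      else 0)
    (Dt : Matrix (Fin N) (Fin N) ℝ)
    (hDt : Dt = Matrix.diagonal (fun m => ∑ p, Wt m p))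
    (Lt : Matrix (Fin N) (Fin N) ℝ)
    (hLt : Lt = Dt - Wt)
    (dt : Fin K → ℝ)
    (hdti : dt i = ((n i : ℝ) - 1) * w i + ∑ j ∈ Finset.univ.erase i, (n j : ℝ) * wt j) :
    n i - 1 ≤
      Module.finrank ℝ
        ↥(LinearMap.ker
          (Matrix.toLin'
            (Lt -
              (((n i : ℝ) * w i + ∑ j ∈ Finset.univ.erase i, (n j : ℝ) * wt j) / dt i)
                • Dt))) := by
  obtain hni | hni := lt_or_ge (n i) 2
  · omega
  subst hLt hDt
  have hcard : ∀ j, #{m | β m = j} = n j :=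
    card_filter_eq_of_card_filter_le β n
      (card_filter_le_of_val_mem_Ico β (fun j => ∑ k ∈ univ.filter (· < j), n k) n hβ)
      (by simp [hN])
  have hdt_pos : 0 < dt i := by
    have hS : 0 ≤ ∑ j ∈ univ.erase i, (n j : ℝ) * wt j :=
      sum_nonneg fun j hj => mul_nonneg (Nat.cast_nonneg _) (hwt j (ne_of_mem_erase hj)).le
    have : (2 : ℝ) ≤ n i := by exact_mod_cast hni
    nlinarith [hw i]
  have hrow : ∀ q, β q = i → ∑ p, Wt q p = dt i := fun q hq => by
    rw [hdti, sum_corrupted_row_of_block_eq hW hWt hcard hq]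
  rw [show (n i : ℝ) * w i + ∑ j ∈ univ.erase i, (n j : ℝ) * wt j = dt i + w i by
    rw [hdti]; ring]
  calc n i - 1 = #{m | β m = i} - 1 := by rw [hcard]
    _ ≤ _ := Matrix.card_sub_one_le_finrank_ker_toLin'_of_col_eq _ _ fun m hm m' hm' => by
      simp only [mem_filter, mem_univ, true_and] at hm hm'
      ext p
      simp only [Matrix.col_apply,
        corrupted_laplacian_sub_smul_degree_apply_of_block_eq hdt_pos.ne' hW hWt hm (hrow m hm),
        corrupted_laplacian_sub_smul_degree_apply_of_block_eq hdt_pos.ne' hW hWt hm' (hrow m' hm')]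

/-- For the group-similarity corrupted affinity matrix `W̃`, the value
`(n i * w i + ∑_{j ≠ i} n j * w̃ i j) / d̃ i` is a generalized eigenvalue of the pair
`(L̃, D̃)` with geometric multiplicity at least `n i - 1`. -/
theorem groupSim_generalized_eigenvalue_block_i
    (K : ℕ) (hK : 2 ≤ K)
    (n : Fin K → ℕ) (hn : ∀ i, 2 ≤ n i)
    (w : Fin K → ℝ) (hw : ∀ i, 0 < w i)
    (N : ℕ) (hN : N = ∑ i, n i)
    (β : Fin N → Fin K)
    (hβ : ∀ m : Fin N,
      (∑ k ∈ Finset.univ.filter (fun k => k < β m), n k) ≤ m.val ∧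
      m.val < (∑ k ∈ Finset.univ.filter (fun k => k < β m), n k) + n (β m))
    (W : Matrix (Fin N) (Fin N) ℝ)
    (hW : ∀ m p, W m p = if m ≠ p ∧ β m = β p then w (β m) else 0)
    (i : Fin K)
    (wt : Fin K → ℝ) (hwt : ∀ j, j ≠ i → 0 < wt j)
    (Wt : Matrix (Fin N) (Fin N) ℝ)
    (hWt : ∀ m p, Wt m p =
      if β m = β p then W m p
      else if β m = i then wt (β p)
      else if β p = i then wt (β m)
      else 0)
    (Dt : Matrix (Fin N) (Fin N) ℝ)
    (hDt : Dt = Matrix.diagonal (fun m => ∑ p, Wt m p))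
    (Lt : Matrix (Fin N) (Fin N) ℝ)
    (hLt : Lt = Dt - Wt)
    (dt : Fin K → ℝ)
    (hdtj : ∀ j, j ≠ i → dt j = ((n j : ℝ) - 1) * w j + (n i : ℝ) * wt j)
    (hdti : dt i = ((n i : ℝ) - 1) * w i + ∑ j ∈ Finset.univ.erase i, (n j : ℝ) * wt j) :
    n i - 1 ≤
      Module.finrank ℝ
        ↥(LinearMap.ker
          (Matrix.toLin'
            (Lt -
              (((n i : ℝ) * w i + ∑ j ∈ Finset.univ.erase i, (n j : ℝ) * wt j) / dt i)
                • Dt))) :=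
  groupSim_generalized_eigenvalue_block_i_general K n w hw N hN β hβ W hW i wt hwt Wt hWt Dt hDt Lt
    hLt dt hdti
end

section
/- For the group-similarity corrupted affinity matrix W̃ and each block j ≠ i, the value (N_j w_j + N_i w̃_{i,j})/d̃_j is a generalized eigenvalue of the pair (L̃, D̃) with geometric multiplicity at least N_j − 1; that is, the kernel of L̃ − ((N_j w_j + N_i w̃_{i,j})/d̃_j) D̃ has dimension at least N_j − 1. -/
/-!
Two distinct indices `a`, `b` of a block `j ≠ i` are twins in `W̃`: their columns agree outside
`{a, b}`, `W̃ a b = W̃ b a = w_j`, and both rows sum to `d̃_j`. Hence `e_a - e_b` lies in the kernel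
of `L̃ - λ D̃` exactly when `λ d̃_j = d̃_j + w_j`, which is the claimed value of `λ`. Fixing `b` and
letting `a` run over the other `N_j - 1` indices of the block gives linearly independent vectors,
as their restrictions to those indices form the standard basis.
-/

open Finset

theorem card_fiber_eq_of_mem_Ico_s6 {κ : Type*} [Fintype κ] [DecidableEq κ] {N : ℕ}
    (n off : κ → ℕ) (hN : N = ∑ k, n k) (β : Fin N → κ)
    (hβ : ∀ m, off (β m) ≤ m.val ∧ m.val < off (β m) + n (β m)) (k : κ) :
    #{m | β m = k} = n k := by
  have hle : ∀ k, #{m | β m = k} ≤ n k := fun k => by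
    calc #{m | β m = k} ≤ #(Ico (off k) (off k + n k)) :=
          card_le_card_of_injOn Fin.val (fun m hm => by
            obtain rfl := (mem_filter.mp hm).2
            simpa using hβ m) Fin.val_injective.injOn
      _ = n k := by simp
  have hsum : ∑ k, #{m | β m = k} = ∑ k, n k := by
    rw [← hN, ← card_eq_sum_card_fiberwise (fun m _ => mem_univ (β m)), card_univ,
      Fintype.card_fin]
  exact (sum_eq_sum_iff_of_le fun k _ => hle k).mp hsum k (mem_univ k)

theorem Submodule.card_sub_one_le_finrank_of_single_sub_single_mem {K ι : Type*} [Field K]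
    [Fintype ι] [DecidableEq ι] (V : Submodule K (ι → K)) (s : Finset ι)
    (hs : ∀ a ∈ s, ∀ b ∈ s, a ≠ b → Pi.single a 1 - Pi.single b 1 ∈ V) :
    #s - 1 ≤ Module.finrank K V := by
  rcases s.eq_empty_or_nonempty with rfl | ⟨b, hb⟩
  · simp
  let v : s.erase b → V := fun a =>
    ⟨Pi.single (a : ι) 1 - Pi.single b 1,
      hs a (mem_of_mem_erase a.2) b hb (ne_of_mem_erase a.2)⟩
  have hrestrict :
      (LinearMap.funLeft K K Subtype.val ∘ₗ V.subtype) ∘ v = Pi.basisFun K (s.erase b) := by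
    ext a c
    have : (c : ι) ≠ b := ne_of_mem_erase c.2
    simp only [Function.comp_apply, LinearMap.comp_apply, Submodule.subtype_apply,
      LinearMap.funLeft_apply, Pi.basisFun_apply, Pi.sub_apply, Pi.single_apply, this,
      if_false, sub_zero, v, Subtype.ext_iff]
  have hli : LinearIndependent K v := by
    apply LinearIndependent.of_comp
      (LinearMap.funLeft K K (Subtype.val : s.erase b → ι) ∘ₗ V.subtype)
    rw [hrestrict]
    exact (Pi.basisFun K _).linearIndependent
  simpa only [Fintype.card_coe, card_erase_of_mem hb] using hli.fintype_card_le_finrank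

theorem Matrix.single_sub_single_mem_ker_of_twin {R ι : Type*} [CommRing R] [Fintype ι]
    [DecidableEq ι] (W : Matrix ι ι R) (d : ι → R) (μ : R) {a b : ι} (hab : a ≠ b)
    (htwin : ∀ p, p ≠ a → p ≠ b → W p a = W p b) (haa : W a a = 0) (hbb : W b b = 0)
    (hsymm : W a b = W b a) (hd : d a = d b) (hμ : μ * d a = d a + W a b) :
    Pi.single a 1 - Pi.single b 1 ∈
      LinearMap.ker (toLin' (diagonal d - W - μ • diagonal d)) := by
  rw [LinearMap.mem_ker, toLin'_apply, mulVec_sub, mulVec_single_one, mulVec_single_one]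
  ext p
  simp only [Pi.sub_apply, Pi.zero_apply, col_apply, sub_apply, smul_apply, smul_eq_mul]
  by_cases hpa : p = a
  · subst hpa
    rw [diagonal_apply_eq, diagonal_apply_ne _ hab, haa]
    linear_combination -hμ
  by_cases hpb : p = b
  · subst hpb
    rw [diagonal_apply_eq, diagonal_apply_ne _ (Ne.symm hab), hbb, ← hd, ← hsymm]
    linear_combination hμ
  rw [diagonal_apply_ne _ hpa, diagonal_apply_ne _ hpb, htwin p hpa hpb]
  ring

section CorruptedAffinity

variable {ι κ : Type*} [DecidableEq ι] [DecidableEq κ]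

def IsBlockAffinity (β : ι → κ) (w : κ → ℝ) (W : Matrix ι ι ℝ) : Prop :=
  ∀ m p, W m p = if m ≠ p ∧ β m = β p then w (β m) else 0

def IsGroupCorruption (β : ι → κ) (i : κ) (wt : κ → ℝ) (W Wt : Matrix ι ι ℝ) : Prop :=
  ∀ m p, Wt m p =
    if β m = β p then W m p
    else if β m = i then wt (β p)
    else if β p = i then wt (β m)
    else 0

variable {β : ι → κ} {w : κ → ℝ} {W : Matrix ι ι ℝ} {i : κ} {wt : κ → ℝ} {Wt : Matrix ι ι ℝ}

theorem IsGroupCorruption.apply_self (hW : IsBlockAffinity β w W)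
    (hWt : IsGroupCorruption β i wt W Wt) (m : ι) : Wt m m = 0 := by
  simp [hWt m m, hW m m]

theorem IsGroupCorruption.apply_of_ne_of_eq (hW : IsBlockAffinity β w W)
    (hWt : IsGroupCorruption β i wt W Wt) {m p : ι} (hmp : m ≠ p) (h : β m = β p) :
    Wt m p = w (β m) := by
  simp [hWt m p, hW m p, hmp, h]

theorem IsGroupCorruption.apply_eq_of_eq (hW : IsBlockAffinity β w W)
    (hWt : IsGroupCorruption β i wt W Wt) {m m' p : ι} (h : β m = β m') (hpm : p ≠ m)
    (hpm' : p ≠ m') : Wt p m = Wt p m' := by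
  simp [hWt p m, hWt p m', hW p m, hW p m', h, hpm, hpm']

theorem IsGroupCorruption.row_sum [Fintype ι] (hW : IsBlockAffinity β w W)
    (hWt : IsGroupCorruption β i wt W Wt) {m : ι} (hm : β m ≠ i) :
    ∑ q, Wt m q = ((#{q | β q = β m} : ℝ) - 1) * w (β m) + #{q | β q = i} * wt (β m) := by
  have hsplit : ∀ q, Wt m q =
      ((if β q = β m then w (β m) else 0) - if m = q then w (β m) else 0) +
        if β q = i then wt (β m) else 0 := by
    intro q
    by_cases hmq : m = q
    · subst hmq; simp [hWt m m, hW m m, hm]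
    by_cases hq : β q = β m
    · simp [hWt m q, hW m q, hmq, hq, hm]
    · simp [hWt m q, hmq, hq, hm, Ne.symm hq]
  simp only [hsplit, sum_add_distrib, sum_sub_distrib, sum_ite_eq, ← sum_filter, sum_const,
    nsmul_eq_mul, mem_univ, if_true]
  ring

end CorruptedAffinity

theorem groupSim_generalized_eigenvalue_other_blocks_general
    (K : ℕ)
    (n : Fin K → ℕ) (hn : ∀ i, 2 ≤ n i)
    (w : Fin K → ℝ) (hw : ∀ i, 0 < w i)
    (N : ℕ) (hN : N = ∑ i, n i)
    (β : Fin N → Fin K)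
    (hβ : ∀ m : Fin N,
      (∑ k ∈ Finset.univ.filter (fun k => k < β m), n k) ≤ m.val ∧
      m.val < (∑ k ∈ Finset.univ.filter (fun k => k < β m), n k) + n (β m))
    (W : Matrix (Fin N) (Fin N) ℝ)
    (hW : ∀ m p, W m p = if m ≠ p ∧ β m = β p then w (β m) else 0)
    (i : Fin K)
    (wt : Fin K → ℝ) (hwt : ∀ j, j ≠ i → 0 < wt j)
    (Wt : Matrix (Fin N) (Fin N) ℝ)
    (hWt : ∀ m p, Wt m p =
      if β m = β p then W m p
      else if β m = i then wt (β p)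
      else if β p = i then wt (β m)
      else 0)
    (Dt : Matrix (Fin N) (Fin N) ℝ)
    (hDt : Dt = Matrix.diagonal (fun m => ∑ p, Wt m p))
    (Lt : Matrix (Fin N) (Fin N) ℝ)
    (hLt : Lt = Dt - Wt)
    (dt : Fin K → ℝ)
    (hdtj : ∀ j, j ≠ i → dt j = ((n j : ℝ) - 1) * w j + (n i : ℝ) * wt j) :
    ∀ j : Fin K, j ≠ i →
      n j - 1 ≤
        Module.finrank ℝ
          ↥(LinearMap.ker
            (Matrix.toLin'
              (Lt - (((n j : ℝ) * w j + (n i : ℝ) * wt j) / dt j) • Dt))) := by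
  intro j hj
  subst hLt hDt
  replace hW : IsBlockAffinity β w W := hW
  replace hWt : IsGroupCorruption β i wt W Wt := hWt
  have hcard :=
    card_fiber_eq_of_mem_Ico_s6 n (fun k => ∑ k' ∈ univ.filter (· < k), n k') hN β hβ
  have hdeg : ∀ m, β m = j → ∑ q, Wt m q = dt j := fun m hm => by
    rw [hWt.row_sum hW (hm ▸ hj), hm, hcard, hcard, hdtj j hj]
  have hdt_pos : 0 < dt j := by
    have : (2 : ℝ) ≤ n j := by exact_mod_cast hn j
    rw [hdtj j hj]
    nlinarith [hw j, hwt j hj, (n i).cast_nonneg (α := ℝ)]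
  have hμ : ((n j : ℝ) * w j + n i * wt j) / dt j * dt j = dt j + w j := by
    rw [div_mul_cancel₀ _ hdt_pos.ne', hdtj j hj]; ring
  conv_lhs => rw [← hcard j]
  refine Submodule.card_sub_one_le_finrank_of_single_sub_single_mem _ _ fun a ha b hb hab => ?_
  rw [mem_filter_univ] at ha hb
  refine Matrix.single_sub_single_mem_ker_of_twin _ _ _ hab
    (fun p hpa hpb => hWt.apply_eq_of_eq hW (ha.trans hb.symm) hpa hpb)
    (hWt.apply_self hW a) (hWt.apply_self hW b) ?_ (by rw [hdeg a ha, hdeg b hb]) ?_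
  · rw [hWt.apply_of_ne_of_eq hW hab (ha.trans hb.symm),
      hWt.apply_of_ne_of_eq hW (Ne.symm hab) (hb.trans ha.symm), ha, hb]
  · rw [hdeg a ha, hWt.apply_of_ne_of_eq hW hab (ha.trans hb.symm), ha, hμ]

/-- For the group-similarity corrupted affinity matrix `W̃` and each block
`j ≠ i`, the value `(n j * w j + n i * w̃ i j) / d̃ j` is a generalized eigenvalue of the
pair `(L̃, D̃)` with geometric multiplicity at least `n j - 1`. -/
theorem groupSim_generalized_eigenvalue_other_blocks
    (K : ℕ) (hK : 2 ≤ K)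
    (n : Fin K → ℕ) (hn : ∀ i, 2 ≤ n i)
    (w : Fin K → ℝ) (hw : ∀ i, 0 < w i)
    (N : ℕ) (hN : N = ∑ i, n i)
    (β : Fin N → Fin K)
    (hβ : ∀ m : Fin N,
      (∑ k ∈ Finset.univ.filter (fun k => k < β m), n k) ≤ m.val ∧
      m.val < (∑ k ∈ Finset.univ.filter (fun k => k < β m), n k) + n (β m))
    (W : Matrix (Fin N) (Fin N) ℝ)
    (hW : ∀ m p, W m p = if m ≠ p ∧ β m = β p then w (β m) else 0)
    (i : Fin K)
    (wt : Fin K → ℝ) (hwt : ∀ j, j ≠ i → 0 < wt j)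
    (Wt : Matrix (Fin N) (Fin N) ℝ)
    (hWt : ∀ m p, Wt m p =
      if β m = β p then W m p
      else if β m = i then wt (β p)
      else if β p = i then wt (β m)
      else 0)
    (Dt : Matrix (Fin N) (Fin N) ℝ)
    (hDt : Dt = Matrix.diagonal (fun m => ∑ p, Wt m p))
    (Lt : Matrix (Fin N) (Fin N) ℝ)
    (hLt : Lt = Dt - Wt)
    (dt : Fin K → ℝ)
    (hdtj : ∀ j, j ≠ i → dt j = ((n j : ℝ) - 1) * w j + (n i : ℝ) * wt j)
    (hdti : dt i = ((n i : ℝ) - 1) * w i + ∑ j ∈ Finset.univ.erase i, (n j : ℝ) * wt j) :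
    ∀ j : Fin K, j ≠ i →
      n j - 1 ≤
        Module.finrank ℝ
          ↥(LinearMap.ker
            (Matrix.toLin'
              (Lt - (((n j : ℝ) * w j + (n i : ℝ) * wt j) / dt j) • Dt))) :=
  groupSim_generalized_eigenvalue_other_blocks_general K n hn w hw N hN β hβ W hW i wt hwt Wt hWt Dt
    hDt Lt hLt dt hdtj
end

section
/- For the group-similarity corrupted affinity matrix W̃: 0 is a generalized eigenvalue of the pair (L̃, D̃), and every real generalized eigenvalue λ of (L̃, D̃) satisfies λ = 0, or λ = (N_i w_i + Σ_{j≠i} N_j w̃_{i,j})/d̃_i, or λ = (N_j w_j + N_i w̃_{i,j})/d̃_j for some j ≠ i, or Σ_{j≠i} d̃_j N_j w̃_{i,j} ∏_{k≠i, k≠j} (N_i w̃_{i,k} − λ d̃_k) + d̃_i ∏_{k≠i} (N_i w̃_{i,k} − λ d̃_k) = 0. -/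
open Finset

lemma block_card' {K N : ℕ} (n : Fin K → ℕ) (hN : N = ∑ i, n i)
    (β : Fin N → Fin K)
    (hβ : ∀ m : Fin N,
      (∑ k ∈ Finset.univ.filter (fun k => k < β m), n k) ≤ m.val ∧
      m.val < (∑ k ∈ Finset.univ.filter (fun k => k < β m), n k) + n (β m)) :
    ∀ j, (Finset.univ.filter (fun m : Fin N => β m = j)).card = n j := by
  classical
  set off : Fin K → ℕ := fun j => ∑ k ∈ Finset.univ.filter (fun k => k < j), n k with hoff
  have hmono : ∀ j j' : Fin K, j < j' → off j + n j ≤ off j' := by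
    intro j j' hjj
    have hsub : insert j (Finset.univ.filter (fun k => k < j)) ⊆
        Finset.univ.filter (fun k => k < j') := by
      intro k hk
      simp only [Finset.mem_insert, Finset.mem_filter, Finset.mem_univ, true_and] at *
      rcases hk with h | h
      · exact h ▸ hjj
      · exact lt_trans h hjj
    have hnotmem : j ∉ Finset.univ.filter (fun k => k < j) := by simp
    have := Finset.sum_le_sum_of_subset hsub (f := n)
    rwa [Finset.sum_insert hnotmem, add_comm] at this
  have hle : ∀ j : Fin K, off j + n j ≤ N := by
    intro j
    have hnotmem : j ∉ Finset.univ.filter (fun k => k < j) := by simp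
    have hsub : insert j (Finset.univ.filter (fun k => k < j)) ⊆ Finset.univ :=
      Finset.subset_univ _
    have := Finset.sum_le_sum_of_subset hsub (f := n)
    rw [Finset.sum_insert hnotmem, add_comm] at this
    rw [hN]; exact this
  have hb : ∀ m : Fin N, off (β m) ≤ m.val ∧ m.val < off (β m) + n (β m) := fun m => hβ m
  have huniq : ∀ (m : Fin N) (j : Fin K), off j ≤ m.val → m.val < off j + n j → β m = j := by
    intro m j h1 h2
    rcases lt_trichotomy (β m) j with h | h | h
    · have := hmono _ _ h
      have := (hb m).2
      omega
    · exact h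
    · have := hmono _ _ h
      have := (hb m).1
      omega
  intro j
  have hfe : (Finset.univ.filter fun m : Fin N => β m = j)
      = (Finset.Ico (off j) (off j + n j)).attachFin
          (fun t ht => lt_of_lt_of_le (Finset.mem_Ico.mp ht).2 (hle j)) := by
    ext m
    simp only [Finset.mem_filter, Finset.mem_univ, true_and, Finset.mem_attachFin,
      Finset.mem_Ico]
    constructor
    · rintro rfl
      exact ⟨(hb m).1, (hb m).2⟩
    · rintro ⟨h1, h2⟩
      exact huniq m j h1 h2
  rw [hfe, Finset.card_attachFin, Nat.card_Ico]
  omega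

lemma row_sum' {K N : ℕ} (β : Fin N → Fin K) (w wt : Fin K → ℝ) (i : Fin K)
    (W Wt : Matrix (Fin N) (Fin N) ℝ)
    (hW : ∀ m p, W m p = if m ≠ p ∧ β m = β p then w (β m) else 0)
    (hWt : ∀ m p, Wt m p =
      if β m = β p then W m p
      else if β m = i then wt (β p)
      else if β p = i then wt (β m)
      else 0)
    (v : Fin N → ℝ) (m : Fin N) :
    ∑ p, Wt m p * v p =
      w (β m) * ((∑ p ∈ Finset.univ.filter (fun p => β p = β m), v p) - v m) +
        (if β m = i then
          ∑ j ∈ Finset.univ.erase i, wt j * ∑ p ∈ Finset.univ.filter (fun p => β p = j), v p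
         else wt (β m) * ∑ p ∈ Finset.univ.filter (fun p => β p = i), v p) := by
  classical
  have hsplit : ∑ p, Wt m p * v p
      = ∑ j : Fin K, ∑ p ∈ Finset.univ.filter (fun p => β p = j), Wt m p * v p :=
    (Finset.sum_fiberwise_of_maps_to (fun p _ => Finset.mem_univ (β p)) _).symm
  rw [hsplit, ← Finset.add_sum_erase _ _ (Finset.mem_univ (β m))]
  congr 1
  · -- diagonal block
    have hmem : m ∈ Finset.univ.filter (fun p => β p = β m) := by simp
    rw [← Finset.add_sum_erase _ _ hmem]
    have h0 : Wt m m * v m = 0 := by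
      rw [hWt, hW]; simp
    rw [h0, zero_add]
    have hterm : ∀ p ∈ (Finset.univ.filter (fun p => β p = β m)).erase m,
        Wt m p * v p = w (β m) * v p := by
      intro p hp
      obtain ⟨hpm, hpf⟩ := Finset.mem_erase.mp hp
      have hbp : β p = β m := (Finset.mem_filter.mp hpf).2
      rw [hWt, hbp, if_pos rfl, hW, if_pos ⟨fun h => hpm h.symm, hbp.symm⟩]
    rw [Finset.sum_congr rfl hterm, ← Finset.mul_sum, Finset.sum_erase_eq_sub hmem]
  · -- off-diagonal blocks
    have hterm : ∀ j ∈ Finset.univ.erase (β m),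
        ∑ p ∈ Finset.univ.filter (fun p => β p = j), Wt m p * v p
          = (if β m = i then wt j else if j = i then wt (β m) else 0) *
              ∑ p ∈ Finset.univ.filter (fun p => β p = j), v p := by
      intro j hj
      have hjm : j ≠ β m := (Finset.mem_erase.mp hj).1
      rw [Finset.mul_sum]
      apply Finset.sum_congr rfl
      intro p hp
      have hbp : β p = j := (Finset.mem_filter.mp hp).2
      rw [hWt, hbp, if_neg (fun h => hjm h.symm)]
    rw [Finset.sum_congr rfl hterm]
    by_cases hmi : β m = i
    · rw [if_pos hmi, hmi]
      apply Finset.sum_congr rfl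
      intro j hj
      rw [if_pos rfl]
    · rw [if_neg hmi]
      have : ∀ j ∈ Finset.univ.erase (β m),
          (if β m = i then wt j else if j = i then wt (β m) else 0) *
              ∑ p ∈ Finset.univ.filter (fun p => β p = j), v p
            = if j = i then wt (β m) * ∑ p ∈ Finset.univ.filter (fun p => β p = i), v p
              else 0 := by
        intro j hj
        rw [if_neg hmi]
        by_cases hji : j = i
        · rw [if_pos hji, if_pos hji, hji]
        · rw [if_neg hji, if_neg hji, zero_mul]
      rw [Finset.sum_congr rfl this, Finset.sum_ite_eq',
        if_pos (Finset.mem_erase.mpr ⟨fun h => hmi h.symm, Finset.mem_univ i⟩)]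

/-- For the group-similarity corrupted affinity matrix `W̃`: `0` is a
generalized eigenvalue of the pair `(L̃, D̃)`, and every real generalized eigenvalue `λ`
of `(L̃, D̃)` satisfies `λ = 0`, or `λ = (n i * w i + ∑_{j ≠ i} n j * w̃ i j) / d̃ i`, or
`λ = (n j * w j + n i * w̃ i j) / d̃ j` for some `j ≠ i`, or
`∑_{j ≠ i} d̃ j * n j * w̃ i j * ∏_{k ≠ i, k ≠ j} (n i * w̃ i k - λ d̃ k)
  + d̃ i * ∏_{k ≠ i} (n i * w̃ i k - λ d̃ k) = 0`. -/
theorem groupSim_generalized_eigenvalues_characterization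
    (K : ℕ) (hK : 2 ≤ K)
    (n : Fin K → ℕ) (hn : ∀ i, 2 ≤ n i)
    (w : Fin K → ℝ) (hw : ∀ i, 0 < w i)
    (N : ℕ) (hN : N = ∑ i, n i)
    (β : Fin N → Fin K)
    (hβ : ∀ m : Fin N,
      (∑ k ∈ Finset.univ.filter (fun k => k < β m), n k) ≤ m.val ∧
      m.val < (∑ k ∈ Finset.univ.filter (fun k => k < β m), n k) + n (β m))
    (W : Matrix (Fin N) (Fin N) ℝ)
    (hW : ∀ m p, W m p = if m ≠ p ∧ β m = β p then w (β m) else 0)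
    (i : Fin K)
    (wt : Fin K → ℝ) (hwt : ∀ j, j ≠ i → 0 < wt j)
    (Wt : Matrix (Fin N) (Fin N) ℝ)
    (hWt : ∀ m p, Wt m p =
      if β m = β p then W m p
      else if β m = i then wt (β p)
      else if β p = i then wt (β m)
      else 0)
    (Dt : Matrix (Fin N) (Fin N) ℝ)
    (hDt : Dt = Matrix.diagonal (fun m => ∑ p, Wt m p))
    (Lt : Matrix (Fin N) (Fin N) ℝ)
    (hLt : Lt = Dt - Wt)
    (dt : Fin K → ℝ)
    (hdtj : ∀ j, j ≠ i → dt j = ((n j : ℝ) - 1) * w j + (n i : ℝ) * wt j)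
    (hdti : dt i = ((n i : ℝ) - 1) * w i + ∑ j ∈ Finset.univ.erase i, (n j : ℝ) * wt j) :
    (Lt - (0 : ℝ) • Dt).det = 0 ∧
    ∀ lam : ℝ, (Lt - lam • Dt).det = 0 →
      lam = 0 ∨
      lam = ((n i : ℝ) * w i + ∑ j ∈ Finset.univ.erase i, (n j : ℝ) * wt j) / dt i ∨
      (∃ j : Fin K, j ≠ i ∧ lam = ((n j : ℝ) * w j + (n i : ℝ) * wt j) / dt j) ∨
      (∑ j ∈ Finset.univ.erase i,
          dt j * (n j : ℝ) * wt j *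
            ∏ k ∈ (Finset.univ.erase i).erase j, ((n i : ℝ) * wt k - lam * dt k)) +
        dt i * ∏ k ∈ Finset.univ.erase i, ((n i : ℝ) * wt k - lam * dt k) = 0 := by
  classical
  have hcard := block_card' n hN β hβ
  have hrow := row_sum' β w wt i W Wt hW hWt
  have hfib_ne : ∀ j : Fin K, ∃ m : Fin N, β m = j := by
    intro j
    have h1 : 0 < (Finset.univ.filter (fun m : Fin N => β m = j)).card := by
      rw [hcard j]; have := hn j; omega
    obtain ⟨m, hm⟩ := Finset.card_pos.mp h1
    exact ⟨m, (Finset.mem_filter.mp hm).2⟩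
  have hnpos : ∀ j : Fin K, (0:ℝ) < (n j : ℝ) := by
    intro j
    have : (2:ℝ) ≤ (n j : ℝ) := by exact_mod_cast hn j
    linarith
  have hn1 : ∀ j : Fin K, (1:ℝ) ≤ (n j : ℝ) - 1 := by
    intro j
    have : (2:ℝ) ≤ (n j : ℝ) := by exact_mod_cast hn j
    linarith
  have hdtpos : ∀ j : Fin K, 0 < dt j := by
    intro j
    by_cases hji : j = i
    · subst hji
      rw [hdti]
      have h1 : 0 < ((n j:ℝ) - 1) * w j := mul_pos (by linarith [hn1 j]) (hw j)
      have h2 : 0 ≤ ∑ k ∈ Finset.univ.erase j, (n k:ℝ) * wt k :=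
        Finset.sum_nonneg fun k hk =>
          le_of_lt (mul_pos (hnpos k) (hwt k (Finset.mem_erase.mp hk).1))
      linarith
    · rw [hdtj j hji]
      have h1 : 0 < ((n j:ℝ) - 1) * w j := mul_pos (by linarith [hn1 j]) (hw j)
      have h2 : 0 < (n i:ℝ) * wt j := mul_pos (hnpos i) (hwt j hji)
      linarith
  -- sum of each fiber of a block-constant function
  have hSconst : ∀ (c : Fin K → ℝ) (j : Fin K),
      ∑ p ∈ Finset.univ.filter (fun p : Fin N => β p = j), c (β p) = (n j : ℝ) * c j := by
    intro c j
    have h1 : ∀ p ∈ Finset.univ.filter (fun p : Fin N => β p = j), c (β p) = c j := by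
      intro p hp
      rw [(Finset.mem_filter.mp hp).2]
    rw [Finset.sum_congr rfl h1, Finset.sum_const, hcard j, nsmul_eq_mul]
  have hdeg : ∀ m : Fin N, ∑ p, Wt m p = dt (β m) := by
    intro m
    have h := hrow (fun _ => 1) m
    simp only [mul_one] at h
    have hSv : ∀ j : Fin K,
        ∑ p ∈ Finset.univ.filter (fun p : Fin N => β p = j), (1:ℝ) = (n j : ℝ) := by
      intro j
      rw [Finset.sum_const, hcard j, nsmul_eq_mul, mul_one]
    rw [h]
    by_cases hmi : β m = i
    · rw [if_pos hmi, hSv, hmi, hdti]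
      have h2 : ∑ j ∈ Finset.univ.erase i, wt j *
            ∑ p ∈ Finset.univ.filter (fun p : Fin N => β p = j), (1:ℝ)
          = ∑ j ∈ Finset.univ.erase i, (n j : ℝ) * wt j := by
        apply Finset.sum_congr rfl
        intro j hj
        rw [hSv j]; ring
      rw [h2]; ring
    · rw [if_neg hmi, hSv, hSv, hdtj (β m) hmi]; ring
  have hmv : ∀ (lam : ℝ) (v : Fin N → ℝ) (m : Fin N),
      (Lt - lam • Dt).mulVec v m
        = (1 - lam) * dt (β m) * v m - ∑ p, Wt m p * v p := by
    intro lam v m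
    have hD : Dt.mulVec v m = dt (β m) * v m := by
      rw [hDt, Matrix.mulVec_diagonal, hdeg m]
    have hWv : Wt.mulVec v m = ∑ p, Wt m p * v p := rfl
    rw [hLt]
    have h1 : (Dt - Wt - lam • Dt).mulVec v m
        = Dt.mulVec v m - Wt.mulVec v m - lam * Dt.mulVec v m := by
      rw [Matrix.sub_mulVec, Matrix.sub_mulVec, Matrix.smul_mulVec]
      simp [Pi.sub_apply, Pi.smul_apply]
    rw [h1, hD, hWv]; ring
  constructor
  · rw [← Matrix.exists_mulVec_eq_zero_iff]
    refine ⟨fun _ => 1, ?_, ?_⟩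
    · obtain ⟨m, _⟩ := hfib_ne i
      intro h
      have := congrFun h m
      simp at this
    · funext m
      rw [hmv 0 (fun _ => 1) m]
      simp only [mul_one, Pi.zero_apply]
      rw [hdeg m]
      ring
  · intro lam hdet
    obtain ⟨v, hv0, hv⟩ := Matrix.exists_mulVec_eq_zero_iff.mpr hdet
    set s : Fin K → ℝ := fun j => ∑ p ∈ Finset.univ.filter (fun p : Fin N => β p = j), v p
      with hs_def
    have heqm : ∀ m : Fin N, (1 - lam) * dt (β m) * v m = ∑ p, Wt m p * v p := by
      intro m
      have h := congrFun hv m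
      rw [hmv] at h
      simp only [Pi.zero_apply] at h
      linarith [h]
    set a : Fin K → ℝ := fun j => (1 - lam) * dt j + w j with ha
    have hrowj : ∀ m : Fin N, β m ≠ i →
        a (β m) * v m = w (β m) * s (β m) + wt (β m) * s i := by
      intro m hmi
      have h1 := heqm m
      rw [hrow v m, if_neg hmi] at h1
      simp only [ha, hs_def]
      linear_combination h1
    have hrowi : ∀ m : Fin N, β m = i →
        a i * v m = w i * s i + ∑ j ∈ Finset.univ.erase i, wt j * s j := by
      intro m hmi
      have h1 := heqm m
      rw [hrow v m, if_pos hmi, hmi] at h1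
      simp only [ha, hs_def]
      linear_combination h1
    by_cases hai : a i = 0
    · right; left
      rw [eq_div_iff (hdtpos i).ne']
      have h1 : lam * dt i = dt i + w i := by
        simp only [ha] at hai; linarith
      rw [h1, hdti]; ring
    by_cases haj : ∃ j, j ≠ i ∧ a j = 0
    · obtain ⟨j, hji, hajj⟩ := haj
      right; right; left
      refine ⟨j, hji, ?_⟩
      rw [eq_div_iff (hdtpos j).ne']
      have h1 : lam * dt j = dt j + w j := by
        simp only [ha] at hajj; linarith
      rw [h1, hdtj j hji]; ring
    push_neg at haj
    have hane : ∀ j, a j ≠ 0 := by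
      intro j
      by_cases hji : j = i
      · exact hji ▸ hai
      · exact haj j hji
    by_cases hlam : lam = 0
    · left; exact hlam
    right; right; right
    -- block-constant values
    set c : Fin K → ℝ := fun j =>
      if j = i then (w i * s i + ∑ j' ∈ Finset.univ.erase i, wt j' * s j') / a i
      else (w j * s j + wt j * s i) / a j with hc
    have hcival : c i = (w i * s i + ∑ j' ∈ Finset.univ.erase i, wt j' * s j') / a i := by
      rw [hc]; simp
    have hcjval : ∀ j, j ≠ i → c j = (w j * s j + wt j * s i) / a j := by
      intro j hj
      rw [hc]; simp [hj]
    have hvc : ∀ m : Fin N, v m = c (β m) := by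
      intro m
      by_cases hmi : β m = i
      · rw [hmi, hcival, eq_div_iff (hane i)]
        linear_combination hrowi m hmi
      · rw [hcjval (β m) hmi, eq_div_iff (hane (β m))]
        linear_combination hrowj m hmi
    have hs : ∀ j : Fin K, s j = (n j : ℝ) * c j := by
      intro j
      have h1 : s j = ∑ p ∈ Finset.univ.filter (fun p : Fin N => β p = j), c (β p) :=
        Finset.sum_congr rfl fun p _ => hvc p
      rw [h1, hSconst]
    have hCj : ∀ j, j ≠ i →
        ((n i:ℝ) * wt j - lam * dt j) * c j = (n i:ℝ) * wt j * c i := by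
      intro j hji
      obtain ⟨m, hm⟩ := hfib_ne j
      have h1 := hrowj m (by rw [hm]; exact hji)
      rw [hm, hvc m, hm, hs j, hs i] at h1
      simp only [ha] at h1
      linear_combination h1 - c j * (hdtj j hji)
    have hCi : ((∑ j ∈ Finset.univ.erase i, (n j:ℝ) * wt j) - lam * dt i) * c i
        = ∑ j ∈ Finset.univ.erase i, (n j:ℝ) * wt j * c j := by
      obtain ⟨m, hm⟩ := hfib_ne i
      have h1 := hrowi m hm
      rw [hvc m, hm, hs i] at h1
      have h2 : ∑ j ∈ Finset.univ.erase i, wt j * s j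
          = ∑ j ∈ Finset.univ.erase i, (n j:ℝ) * wt j * c j :=
        Finset.sum_congr rfl fun j hj => by rw [hs j]; ring
      rw [h2] at h1
      simp only [ha] at h1
      linear_combination h1 - c i * hdti
    obtain ⟨m0, hm0⟩ : ∃ m : Fin N, v m ≠ 0 := by
      by_contra h
      push_neg at h
      exact hv0 (funext h)
    have hcb : c (β m0) ≠ 0 := by rw [← hvc m0]; exact hm0
    set f : Fin K → ℝ := fun k => (n i : ℝ) * wt k - lam * dt k with hf
    set Z : Finset (Fin K) :=
      (Finset.univ.erase i).filter (fun k => f k = 0) with hZ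
    rcases lt_or_ge 1 Z.card with hZ2 | hZ1
    · -- at least two zero factors: every term vanishes
      obtain ⟨k1, hk1, k2, hk2, hk12⟩ := Finset.one_lt_card.mp hZ2
      have hk1' := Finset.mem_filter.mp hk1
      have hk2' := Finset.mem_filter.mp hk2
      have hprod : ∏ k ∈ Finset.univ.erase i, f k = 0 :=
        Finset.prod_eq_zero hk1'.1 hk1'.2
      have hsum : ∑ j ∈ Finset.univ.erase i,
          dt j * (n j : ℝ) * wt j * ∏ k ∈ (Finset.univ.erase i).erase j, f k = 0 := by
        apply Finset.sum_eq_zero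
        intro j hj
        by_cases h : k1 = j
        · have hk2j : k2 ≠ j := fun hh => hk12 (h.trans hh.symm)
          rw [Finset.prod_eq_zero (Finset.mem_erase.mpr ⟨hk2j, hk2'.1⟩) hk2'.2, mul_zero]
        · rw [Finset.prod_eq_zero (Finset.mem_erase.mpr ⟨h, hk1'.1⟩) hk1'.2, mul_zero]
      rw [hsum, hprod, mul_zero, add_zero]
    · by_cases hci : c i = 0
      · -- contradiction: v = 0
        exfalso
        have hznot : ∀ j, j ≠ i → f j ≠ 0 → c j = 0 := by
          intro j hj hfj
          have h1 := hCj j hj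
          rw [hci, mul_zero] at h1
          exact (mul_eq_zero.mp h1).resolve_left hfj
        have hall : ∀ j, c j = 0 := by
          intro j
          by_cases hji : j = i
          · exact hji ▸ hci
          by_cases hfj : f j = 0
          · have hjZ : j ∈ Z := Finset.mem_filter.mpr
              ⟨Finset.mem_erase.mpr ⟨hji, Finset.mem_univ j⟩, hfj⟩
            have honly : ∀ j' ∈ Finset.univ.erase i, j' ≠ j → c j' = 0 := by
              intro j' hj' hne
              apply hznot j' (Finset.mem_erase.mp hj').1
              intro hfj'
              have hj'Z : j' ∈ Z := Finset.mem_filter.mpr ⟨hj', hfj'⟩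
              have : 1 < Z.card := Finset.one_lt_card.mpr ⟨j, hjZ, j', hj'Z, fun hh => hne hh.symm⟩
              omega
            have hsum : ∑ j' ∈ Finset.univ.erase i, (n j':ℝ) * wt j' * c j'
                = (n j:ℝ) * wt j * c j :=
              Finset.sum_eq_single_of_mem j (Finset.mem_erase.mpr ⟨hji, Finset.mem_univ j⟩)
                (fun b hb hbj => by rw [honly b hb hbj, mul_zero])
            have h0 : (n j:ℝ) * wt j * c j = 0 := by
              rw [← hsum, ← hCi, hci, mul_zero]
            have hpos : (n j:ℝ) * wt j ≠ 0 := ne_of_gt (mul_pos (hnpos j) (hwt j hji))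
            exact (mul_eq_zero.mp h0).resolve_left hpos
          · exact hznot j hji hfj
        exact hcb (hall (β m0))
      · -- no zero factor; derive the polynomial identity
        have hfne : ∀ k, k ≠ i → f k ≠ 0 := by
          intro k hk hfk
          have h1 : f k * c k = (n i:ℝ) * wt k * c i := hCj k hk
          rw [hfk, zero_mul] at h1
          have hpos : (n i:ℝ) * wt k ≠ 0 := ne_of_gt (mul_pos (hnpos i) (hwt k hk))
          exact hci ((mul_eq_zero.mp h1.symm).resolve_left hpos)
        have key : ∀ j ∈ Finset.univ.erase i,
            f j * ∏ k ∈ (Finset.univ.erase i).erase j, f k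
              = ∏ k ∈ Finset.univ.erase i, f k :=
          fun j hj => Finset.mul_prod_erase _ f hj
        have h1 : ((∑ j ∈ Finset.univ.erase i, (n j:ℝ) * wt j) - lam * dt i) * c i *
              ∏ k ∈ Finset.univ.erase i, f k
            = c i * ∑ j ∈ Finset.univ.erase i,
                (n j:ℝ) * wt j * ((n i:ℝ) * wt j) *
                  ∏ k ∈ (Finset.univ.erase i).erase j, f k := by
          rw [hCi, Finset.sum_mul, Finset.mul_sum]
          apply Finset.sum_congr rfl
          intro j hj
          have hcj : f j * c j = (n i:ℝ) * wt j * c i := hCj j (Finset.mem_erase.mp hj).1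
          rw [← key j hj]
          linear_combination ((n j:ℝ) * wt j * ∏ k ∈ (Finset.univ.erase i).erase j, f k) * hcj
        have h2 : ((∑ j ∈ Finset.univ.erase i, (n j:ℝ) * wt j) - lam * dt i) *
              ∏ k ∈ Finset.univ.erase i, f k
            = ∑ j ∈ Finset.univ.erase i,
                (n j:ℝ) * wt j * ((n i:ℝ) * wt j) *
                  ∏ k ∈ (Finset.univ.erase i).erase j, f k := by
          apply mul_left_cancel₀ hci
          linear_combination h1
        have hgoal : lam * ((∑ j ∈ Finset.univ.erase i,
              dt j * (n j : ℝ) * wt j * ∏ k ∈ (Finset.univ.erase i).erase j, f k) +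
              dt i * ∏ k ∈ Finset.univ.erase i, f k) = 0 := by
          have expand : ∀ j ∈ Finset.univ.erase i,
              lam * (dt j * (n j : ℝ) * wt j * ∏ k ∈ (Finset.univ.erase i).erase j, f k)
                = (n j:ℝ) * wt j * ((n i:ℝ) * wt j) *
                    ∏ k ∈ (Finset.univ.erase i).erase j, f k
                  - (n j:ℝ) * wt j * ∏ k ∈ Finset.univ.erase i, f k := by
            intro j hj
            rw [← key j hj]
            simp only [hf]
            ring
          rw [mul_add, Finset.mul_sum, Finset.sum_congr rfl expand,
            Finset.sum_sub_distrib, ← Finset.sum_mul, ← h2]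
          ring
        exact (mul_eq_zero.mp hgoal).resolve_left hlam
end

section
/- For the affinity matrix W̃ corrupted by a single Type II outlier inserted at position m_II, the non-outlier components of the corrupted vector ṽ satisfy: ṽ_m = v_{σ(m)} for every index m < m_II, and ṽ_m = v_{σ(m)} + w̃_{β(σ(m))} for every index m > m_II; in other words, the components whose index lies strictly between the outlier index and the largest index of block j increase by exactly w̃_j, while components preceding the outlier are unchanged. -/
lemma key_aux {k : ℕ} (M : Matrix (Fin k) (Fin k) ℝ) (m : Fin k) :
    (∑ q ∈ Finset.univ.filter (fun q => m ≤ q),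
      ((Matrix.diagonal (fun r => ∑ s, M r s) - M) m q))
    = ∑ q ∈ Finset.univ.filter (fun q => q < m), M m q := by
  simp only [Matrix.sub_apply, Finset.sum_sub_distrib, Matrix.diagonal_apply]
  rw [Finset.sum_ite_eq]
  have hm : m ∈ Finset.univ.filter (fun q => m ≤ q) := by simp
  rw [if_pos hm]
  have hsplit := Finset.sum_filter_add_sum_filter_not Finset.univ (fun q => m ≤ q) (M m)
  have hnot : Finset.univ.filter (fun q => ¬ m ≤ q) = Finset.univ.filter (fun q => q < m) := by
    apply Finset.filter_congr; intro q _; simp [not_le]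
  rw [hnot] at hsplit
  linarith

/-- For the affinity matrix `W̃` corrupted by a single Type II outlier inserted
at position `m_II` (here `p : Fin (N+1)`, with `p.succAbove` playing the role of the
reindexing `σ⁻¹`): the non-outlier components of the corrupted vector `ṽ` satisfy
`ṽ m = v (σ m)` for every index `m < m_II` and `ṽ m = v (σ m) + w̃ (β (σ m))` for every
index `m > m_II`. -/
theorem typeII_insertion_effect_on_vector_v
    (K : ℕ) (hK : 1 ≤ K)
    (n : Fin K → ℕ) (hn : ∀ i, 2 ≤ n i)
    (w : Fin K → ℝ) (hw : ∀ i, 0 < w i)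
    (N : ℕ) (hN : N = ∑ i, n i)
    (β : Fin N → Fin K)
    (hβ : ∀ m : Fin N,
      (∑ k ∈ Finset.univ.filter (fun k => k < β m), n k) ≤ m.val ∧
      m.val < (∑ k ∈ Finset.univ.filter (fun k => k < β m), n k) + n (β m))
    (W : Matrix (Fin N) (Fin N) ℝ)
    (hW : ∀ m p, W m p = if m ≠ p ∧ β m = β p then w (β m) else 0)
    (D : Matrix (Fin N) (Fin N) ℝ)
    (hD : D = Matrix.diagonal (fun m => ∑ p, W m p))
    (L : Matrix (Fin N) (Fin N) ℝ)
    (hL : L = D - W)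
    (v : Fin N → ℝ)
    (hv : ∀ m : Fin N, v m = ∑ p ∈ Finset.univ.filter (fun p => m ≤ p), L m p)
    (wt : Fin K → ℝ) (hwt : ∀ j, 0 < wt j)
    (p : Fin (N + 1))
    (Wt : Matrix (Fin (N + 1)) (Fin (N + 1)) ℝ)
    (hWt1 : ∀ a b : Fin N, Wt (p.succAbove a) (p.succAbove b) = W a b)
    (hWt2 : ∀ a : Fin N, Wt p (p.succAbove a) = wt (β a))
    (hWt3 : ∀ a : Fin N, Wt (p.succAbove a) p = wt (β a))
    (hWt4 : Wt p p = 0)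
    (Dt : Matrix (Fin (N + 1)) (Fin (N + 1)) ℝ)
    (hDt : Dt = Matrix.diagonal (fun m => ∑ q, Wt m q))
    (Lt : Matrix (Fin (N + 1)) (Fin (N + 1)) ℝ)
    (hLt : Lt = Dt - Wt)
    (vt : Fin (N + 1) → ℝ)
    (hvt : ∀ m : Fin (N + 1), vt m = ∑ q ∈ Finset.univ.filter (fun q => m ≤ q), Lt m q) :
    ∀ a : Fin N,
      (p.succAbove a < p → vt (p.succAbove a) = v a) ∧
      (p < p.succAbove a → vt (p.succAbove a) = v a + wt (β a)) := by
  intro a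
  set m := p.succAbove a with hm
  have hvt' : vt m = ∑ q ∈ Finset.univ.filter (fun q => q < m), Wt m q := by
    rw [hvt, hLt, hDt, key_aux]
  have hv' : v a = ∑ b ∈ Finset.univ.filter (fun b => b < a), W a b := by
    rw [hv, hL, hD, key_aux]
  have hmain : vt m = (if p < m then wt (β a) else 0) + v a := by
    rw [hvt', Finset.sum_filter,
      Fin.sum_univ_succAbove (fun q => if q < m then Wt m q else 0) p]
    have h2 : ∀ b : Fin N,
        (if p.succAbove b < m then Wt m (p.succAbove b) else 0)
        = (if b < a then W a b else 0) := by
      intro b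
      simp only [hm, Fin.succAbove_lt_succAbove_iff, hWt1]
    simp only [h2]
    rw [← Finset.sum_filter, ← hv']
    congr 1
    by_cases hpm : p < m
    · rw [if_pos hpm, if_pos hpm, hm, hWt3]
    · rw [if_neg hpm, if_neg hpm]
  have hne : p ≠ m := (Fin.succAbove_ne p a).symm
  constructor
  · intro hlt
    rw [hmain, if_neg (by exact fun h => absurd (lt_trans h hlt) (lt_irrefl _)), zero_add]
  · intro hlt
    rw [hmain, if_pos hlt]; ring
end

section
/- For the affinity matrix W̃ corrupted by a single Type II outlier inserted at position m_II, the component of the corrupted vector ṽ associated with the outlier is given as follows: if j ∈ {1, …, K} and Σ_{k<j} N_k + 1 ≤ m_II ≤ Σ_{k≤j} N_k + 1, then ṽ_{m_II} = Σ_{k=1}^{j−1} N_k w̃_k + (m_II − (Σ_{k<j} N_k + 1)) w̃_j. In particular ṽ_{m_II} = 0 when the outlier precedes all samples of block 1, and ṽ_{m_II} = Σ_{k=1}^{K−1} N_k w̃_k + (m_II − ℓ_K) w̃_K when ℓ_K ≤ m_II ≤ N + 1. -/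
lemma card_val_band (N c d : ℕ) (hd : d ≤ N) :
    (Finset.univ.filter (fun a : Fin N => c ≤ a.val ∧ a.val < d)).card = d - c := by
  have himg : (Finset.univ.filter (fun a : Fin N => c ≤ a.val ∧ a.val < d)).image Fin.val
      = Finset.Ico c d := by
    ext m
    simp only [Finset.mem_image, Finset.mem_filter, Finset.mem_univ, true_and, Finset.mem_Ico]
    constructor
    · rintro ⟨a, ha, rfl⟩; exact ha
    · rintro ⟨h1, h2⟩; exact ⟨⟨m, by omega⟩, ⟨h1, h2⟩, rfl⟩
  have := Finset.card_image_of_injective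
    (Finset.univ.filter (fun a : Fin N => c ≤ a.val ∧ a.val < d)) (Fin.val_injective)
  rw [himg, Nat.card_Ico] at this
  omega

def Spre {K : ℕ} (n : Fin K → ℕ) (j : Fin K) : ℕ :=
  ∑ k ∈ Finset.univ.filter (fun k => k < j), n k

lemma Spre_mono {K : ℕ} (n : Fin K → ℕ) {k k' : Fin K} (h : k < k') :
    Spre n k + n k ≤ Spre n k' := by
  have hnot : k ∉ Finset.univ.filter (fun i : Fin K => i < k) := by simp
  have hsub : insert k (Finset.univ.filter (fun i : Fin K => i < k))
      ⊆ Finset.univ.filter (fun i : Fin K => i < k') := by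
    intro i hi
    simp only [Finset.mem_insert, Finset.mem_filter, Finset.mem_univ, true_and] at hi ⊢
    rcases hi with rfl | hi
    · exact h
    · exact hi.trans h
  calc Spre n k + n k = ∑ i ∈ insert k (Finset.univ.filter (fun i : Fin K => i < k)), n i := by
        rw [Finset.sum_insert hnot]; unfold Spre; omega
    _ ≤ Spre n k' := Finset.sum_le_sum_of_subset hsub

lemma Spre_le {K : ℕ} (n : Fin K → ℕ) (k : Fin K) :
    Spre n k + n k ≤ ∑ i, n i := by
  have hnot : k ∉ Finset.univ.filter (fun i : Fin K => i < k) := by simp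
  calc Spre n k + n k = ∑ i ∈ insert k (Finset.univ.filter (fun i : Fin K => i < k)), n i := by
        rw [Finset.sum_insert hnot]; unfold Spre; omega
    _ ≤ ∑ i, n i := Finset.sum_le_sum_of_subset (Finset.subset_univ _)

/-- For the affinity matrix `W̃` corrupted by a single Type II outlier inserted
at position `m_II` (here `p : Fin (N+1)`, 0-based), the component of the corrupted vector
`ṽ` associated with the outlier is: if `∑_{k < j} n k ≤ p ≤ ∑_{k ≤ j} n k` (the 0-based form
of `∑_{k<j} N_k + 1 ≤ m_II ≤ ∑_{k≤j} N_k + 1`), then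
`ṽ p = ∑_{k < j} n k * w̃ k + (p - ∑_{k < j} n k) * w̃ j`. -/
theorem typeII_insertion_outlier_component
    (K : ℕ) (hK : 1 ≤ K)
    (n : Fin K → ℕ) (hn : ∀ i, 2 ≤ n i)
    (w : Fin K → ℝ) (hw : ∀ i, 0 < w i)
    (N : ℕ) (hN : N = ∑ i, n i)
    (β : Fin N → Fin K)
    (hβ : ∀ m : Fin N,
      (∑ k ∈ Finset.univ.filter (fun k => k < β m), n k) ≤ m.val ∧
      m.val < (∑ k ∈ Finset.univ.filter (fun k => k < β m), n k) + n (β m))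
    (W : Matrix (Fin N) (Fin N) ℝ)
    (hW : ∀ m p, W m p = if m ≠ p ∧ β m = β p then w (β m) else 0)
    (wt : Fin K → ℝ) (hwt : ∀ j, 0 < wt j)
    (p : Fin (N + 1))
    (Wt : Matrix (Fin (N + 1)) (Fin (N + 1)) ℝ)
    (hWt1 : ∀ a b : Fin N, Wt (p.succAbove a) (p.succAbove b) = W a b)
    (hWt2 : ∀ a : Fin N, Wt p (p.succAbove a) = wt (β a))
    (hWt3 : ∀ a : Fin N, Wt (p.succAbove a) p = wt (β a))
    (hWt4 : Wt p p = 0)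
    (Dt : Matrix (Fin (N + 1)) (Fin (N + 1)) ℝ)
    (hDt : Dt = Matrix.diagonal (fun m => ∑ q, Wt m q))
    (Lt : Matrix (Fin (N + 1)) (Fin (N + 1)) ℝ)
    (hLt : Lt = Dt - Wt)
    (vt : Fin (N + 1) → ℝ)
    (hvt : ∀ m : Fin (N + 1), vt m = ∑ q ∈ Finset.univ.filter (fun q => m ≤ q), Lt m q) :
    ∀ j : Fin K,
      (∑ k ∈ Finset.univ.filter (fun k => k < j), n k) ≤ p.val →
      p.val ≤ (∑ k ∈ Finset.univ.filter (fun k => k ≤ j), n k) →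
      vt p =
        (∑ k ∈ Finset.univ.filter (fun k => k < j), (n k : ℝ) * wt k) +
          ((p.val : ℝ) - ((∑ k ∈ Finset.univ.filter (fun k => k < j), n k : ℕ) : ℝ)) * wt j := by
  intro j hj1 hj2
  have hj1' : Spre n j ≤ p.val := hj1
  have hpN : p.val ≤ N := by omega
  have hSN : ∀ k : Fin K, Spre n k + n k ≤ N := fun k => hN ▸ Spre_le n k
  have hβ' : ∀ m : Fin N, Spre n (β m) ≤ m.val ∧ m.val < Spre n (β m) + n (β m) := hβ
  have hβeq : ∀ (a : Fin N) (k : Fin K), Spre n k ≤ a.val → a.val < Spre n k + n k → β a = k := by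
    intro a k h1 h2
    rcases lt_trichotomy (β a) k with h | h | h
    · have h3 := (hβ' a).2
      have h4 := Spre_mono n h
      omega
    · exact h
    · have h3 := (hβ' a).1
      have h4 := Spre_mono n h
      omega
  have hj2' : p.val ≤ Spre n j + n j := by
    have hins : Finset.univ.filter (fun k : Fin K => k ≤ j)
        = insert j (Finset.univ.filter (fun k : Fin K => k < j)) := by
      ext i
      simp only [Finset.mem_filter, Finset.mem_univ, true_and, Finset.mem_insert]
      constructor
      · intro h; rcases eq_or_lt_of_le h with h | h
        · exact Or.inl h
        · exact Or.inr h
      · rintro (rfl | h)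
        · exact le_refl _
        · exact le_of_lt h
    have hnot : j ∉ Finset.univ.filter (fun i : Fin K => i < j) := by simp
    rw [hins, Finset.sum_insert hnot] at hj2
    unfold Spre
    omega
  -- value of succAbove
  have hsv : ∀ a : Fin N, (p.succAbove a).val = if a.val < p.val then a.val else a.val + 1 := by
    intro a
    split_ifs with h
    · rw [Fin.succAbove_of_castSucc_lt p a (by simpa [Fin.lt_def] using h)]; rfl
    · rw [Fin.succAbove_of_le_castSucc p a (by simp [Fin.le_def]; omega)]; rfl
  have hle : ∀ a : Fin N, (p ≤ p.succAbove a) ↔ p.val ≤ a.val := by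
    intro a
    rw [Fin.le_def, hsv a]
    split_ifs with h <;> omega
  -- Step 1
  have step1 : vt p = ∑ a : Fin N, (if a.val < p.val then wt (β a) else 0) := by
    rw [hvt p]
    have e1 : ∀ q ∈ Finset.univ.filter (fun q => p ≤ q), Lt p q = Dt p q - Wt p q := by
      intro q _; rw [hLt]; simp [Matrix.sub_apply]
    rw [Finset.sum_congr rfl e1, Finset.sum_sub_distrib]
    have e2 : ∑ q ∈ Finset.univ.filter (fun q => p ≤ q), Dt p q = ∑ a : Fin N, wt (β a) := by
      rw [Finset.sum_eq_single_of_mem p (by simp)]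
      · rw [hDt]
        simp only [Matrix.diagonal_apply_eq]
        rw [Fin.sum_univ_succAbove (fun q => Wt p q) p, hWt4, zero_add]
        exact Finset.sum_congr rfl fun a _ => hWt2 a
      · intro q _ hq
        rw [hDt]
        exact Matrix.diagonal_apply_ne _ (Ne.symm hq)
    have e3 : ∑ q ∈ Finset.univ.filter (fun q => p ≤ q), Wt p q
        = ∑ a : Fin N, (if p.val ≤ a.val then wt (β a) else 0) := by
      rw [Finset.sum_filter, Fin.sum_univ_succAbove (fun q => if p ≤ q then Wt p q else 0) p]
      rw [if_pos (le_refl p), hWt4, zero_add]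
      refine Finset.sum_congr rfl fun a _ => ?_
      rw [hWt2 a]
      by_cases h : p.val ≤ a.val
      · rw [if_pos ((hle a).mpr h), if_pos h]
      · rw [if_neg (fun hh => h ((hle a).mp hh)), if_neg h]
    rw [e2, e3, ← Finset.sum_sub_distrib]
    refine Finset.sum_congr rfl fun a _ => ?_
    by_cases h : p.val ≤ a.val
    · rw [if_pos h, if_neg (by omega)]; ring
    · rw [if_neg h, if_pos (by omega)]; ring
  -- Step 2: fiberwise
  have hfiber : ∀ k : Fin K, Finset.univ.filter (fun a : Fin N => β a = k)
      = Finset.univ.filter (fun a : Fin N => Spre n k ≤ a.val ∧ a.val < Spre n k + n k) := by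
    intro k
    ext a
    simp only [Finset.mem_filter, Finset.mem_univ, true_and]
    constructor
    · rintro rfl; exact hβ' a
    · rintro ⟨h1, h2⟩; exact hβeq a k h1 h2
  have hinner : ∀ k : Fin K,
      (∑ a ∈ Finset.univ.filter (fun a : Fin N => β a = k), (if a.val < p.val then wt (β a) else 0))
      = if k < j then (n k : ℝ) * wt k
        else if k = j then ((p.val : ℝ) - ((Spre n j : ℕ) : ℝ)) * wt j else 0 := by
    intro k
    have hterm : ∀ a ∈ Finset.univ.filter (fun a : Fin N => β a = k),
        (if a.val < p.val then wt (β a) else 0) = (if a.val < p.val then wt k else 0) := by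
      intro a ha
      simp only [Finset.mem_filter, Finset.mem_univ, true_and] at ha
      rw [ha]
    rw [Finset.sum_congr rfl hterm, hfiber k]
    rcases lt_trichotomy k j with h | heq | h
    · rw [if_pos h]
      have hc := Spre_mono n h
      have hall : ∀ a ∈ Finset.univ.filter
          (fun a : Fin N => Spre n k ≤ a.val ∧ a.val < Spre n k + n k),
          (if a.val < p.val then wt k else 0) = wt k := by
        intro a ha
        simp only [Finset.mem_filter, Finset.mem_univ, true_and] at ha
        rw [if_pos (by omega)]
      rw [Finset.sum_congr rfl hall, Finset.sum_const, card_val_band N _ _ (hSN k),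
        nsmul_eq_mul]
      congr 2
      omega
    · rw [heq]
      rw [if_neg (lt_irrefl j), if_pos rfl]
      rw [← Finset.sum_filter]
      have hset : (Finset.univ.filter
            (fun a : Fin N => Spre n j ≤ a.val ∧ a.val < Spre n j + n j)).filter
            (fun a => a.val < p.val)
          = Finset.univ.filter (fun a : Fin N => Spre n j ≤ a.val ∧ a.val < p.val) := by
        ext a
        simp only [Finset.mem_filter, Finset.mem_univ, true_and]
        omega
      rw [hset, Finset.sum_const, card_val_band N _ _ hpN, nsmul_eq_mul]
      congr 1
      rw [Nat.cast_sub hj1']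
    · rw [if_neg (asymm h), if_neg h.ne']
      have hc := Spre_mono n h
      have hall0 : ∀ a ∈ Finset.univ.filter
          (fun a : Fin N => Spre n k ≤ a.val ∧ a.val < Spre n k + n k),
          (if a.val < p.val then wt k else 0) = 0 := by
        intro a ha
        simp only [Finset.mem_filter, Finset.mem_univ, true_and] at ha
        rw [if_neg (by omega)]
      rw [Finset.sum_congr rfl hall0, Finset.sum_const_zero]
  -- Final assembly
  rw [step1,
    ← Finset.sum_fiberwise Finset.univ β (fun a : Fin N => if a.val < p.val then wt (β a) else 0),
    Finset.sum_congr rfl (fun k _ => hinner k),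
    ← Finset.sum_filter_add_sum_filter_not Finset.univ (fun k => k < j)]
  congr 1
  · refine Finset.sum_congr rfl fun k hk => ?_
    simp only [Finset.mem_filter, Finset.mem_univ, true_and] at hk
    rw [if_pos hk]
  · rw [Finset.sum_eq_single_of_mem j (by simp)]
    · rw [if_neg (lt_irrefl j), if_pos rfl]
      rfl
    · intro k hk hkj
      simp only [Finset.mem_filter, Finset.mem_univ, true_and] at hk
      rw [if_neg hk, if_neg hkj]
end

section
/- For the group-similarity corrupted affinity matrix W̃ in which block i has similarity w̃_{i,j} with each of the other blocks, the corrupted vector ṽ satisfies: ṽ_m = v_m for every index m in a block j with j < i; ṽ_m = v_m + N_i w̃_{i,j} for every index m in a block j with j > i; and ṽ_m = v_m + Σ_{k=1}^{i−1} N_k w̃_{i,k} for every index m in block i (so the components of block i are unchanged when i = 1). -/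
/-- For the group-similarity corrupted affinity matrix `W̃` in which block `i`
has similarity `w̃ i j` with each of the other blocks, the corrupted vector `ṽ` satisfies:
`ṽ m = v m` for every index `m` in a block `j < i`; `ṽ m = v m + n i * w̃ i (β m)` for every
index `m` in a block `j > i`; and `ṽ m = v m + ∑_{k < i} n k * w̃ i k` for every index `m`
in block `i` (so block `i` is unchanged when `i = 1`). -/
theorem groupSim_effect_on_vector_v
    (K : ℕ) (hK : 2 ≤ K)
    (n : Fin K → ℕ) (hn : ∀ i, 2 ≤ n i)
    (w : Fin K → ℝ) (hw : ∀ i, 0 < w i)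
    (N : ℕ) (hN : N = ∑ i, n i)
    (β : Fin N → Fin K)
    (hβ : ∀ m : Fin N,
      (∑ k ∈ Finset.univ.filter (fun k => k < β m), n k) ≤ m.val ∧
      m.val < (∑ k ∈ Finset.univ.filter (fun k => k < β m), n k) + n (β m))
    (W : Matrix (Fin N) (Fin N) ℝ)
    (hW : ∀ m p, W m p = if m ≠ p ∧ β m = β p then w (β m) else 0)
    (D : Matrix (Fin N) (Fin N) ℝ)
    (hD : D = Matrix.diagonal (fun m => ∑ p, W m p))
    (L : Matrix (Fin N) (Fin N) ℝ)
    (hL : L = D - W)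
    (v : Fin N → ℝ)
    (hv : ∀ m : Fin N, v m = ∑ p ∈ Finset.univ.filter (fun p => m ≤ p), L m p)
    (i : Fin K)
    (wt : Fin K → ℝ) (hwt : ∀ j, j ≠ i → 0 < wt j)
    (Wt : Matrix (Fin N) (Fin N) ℝ)
    (hWt : ∀ m p, Wt m p =
      if β m = β p then W m p
      else if β m = i then wt (β p)
      else if β p = i then wt (β m)
      else 0)
    (Dt : Matrix (Fin N) (Fin N) ℝ)
    (hDt : Dt = Matrix.diagonal (fun m => ∑ p, Wt m p))
    (Lt : Matrix (Fin N) (Fin N) ℝ)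
    (hLt : Lt = Dt - Wt)
    (vt : Fin N → ℝ)
    (hvt : ∀ m : Fin N, vt m = ∑ p ∈ Finset.univ.filter (fun p => m ≤ p), Lt m p) :
    ∀ m : Fin N,
      (β m < i → vt m = v m) ∧
      (i < β m → vt m = v m + (n i : ℝ) * wt (β m)) ∧
      (β m = i →
        vt m = v m + ∑ k ∈ Finset.univ.filter (fun k => k < i), (n k : ℝ) * wt k) := by
  classical
  set off : Fin K → ℕ := fun k => ∑ j ∈ Finset.univ.filter (fun j => j < k), n j with hoff_def
  have hstep : ∀ k k' : Fin K, k < k' → off k + n k ≤ off k' := by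
    intro k k' hkk'
    have hns : k ∉ Finset.univ.filter (fun j => j < k) := by simp
    have hsub : insert k (Finset.univ.filter (fun j => j < k)) ⊆
        Finset.univ.filter (fun j => j < k') := by
      intro j hj
      simp only [Finset.mem_insert, Finset.mem_filter, Finset.mem_univ, true_and] at hj ⊢
      rcases hj with rfl | hj
      · exact hkk'
      · exact hj.trans hkk'
    have h := Finset.sum_le_sum_of_subset (f := n) hsub
    rw [Finset.sum_insert hns] at h
    simp only [hoff_def]
    omega
  have hleN : ∀ k : Fin K, off k + n k ≤ N := by
    intro k
    have hns : k ∉ Finset.univ.filter (fun j => j < k) := by simp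
    have h := Finset.sum_le_sum_of_subset (f := n)
      (Finset.subset_univ (insert k (Finset.univ.filter (fun j => j < k))))
    rw [Finset.sum_insert hns] at h
    simp only [hoff_def]
    omega
  have hβ' : ∀ m : Fin N, off (β m) ≤ m.val ∧ m.val < off (β m) + n (β m) := hβ
  have hβiff : ∀ (p : Fin N) (k : Fin K),
      β p = k ↔ off k ≤ p.val ∧ p.val < off k + n k := by
    intro p k
    constructor
    · rintro rfl; exact hβ' p
    · rintro ⟨h1, h2⟩
      rcases lt_trichotomy (β p) k with h | h | h
      · have h3 := hstep _ _ h
        have h4 := (hβ' p).2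
        omega
      · exact h
      · have h3 := hstep _ _ h
        have h4 := (hβ' p).1
        omega
  have hmono : ∀ p q : Fin N, β p < β q → p < q := by
    intro p q h
    have h1 := (hβ' p).2
    have h2 := (hβ' q).1
    have h3 := hstep _ _ h
    have : p.val < q.val := by omega
    exact this
  have hmono' : ∀ p q : Fin N, p ≤ q → β p ≤ β q := by
    intro p q hpq
    by_contra h
    push_neg at h
    exact absurd (hmono _ _ h) (not_lt.2 hpq)
  have hcard : ∀ k : Fin K,
      (Finset.univ.filter (fun p : Fin N => β p = k)).card = n k := by
    intro k
    apply Finset.card_eq_of_bijective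
      (fun x hx => (⟨off k + x, by have := hleN k; omega⟩ : Fin N))
    · intro p hp
      simp only [Finset.mem_filter, Finset.mem_univ, true_and] at hp
      have h := (hβiff p k).1 hp
      refine ⟨p.val - off k, by omega, ?_⟩
      apply Fin.ext
      simp only
      omega
    · intro x hx
      simp only [Finset.mem_filter, Finset.mem_univ, true_and]
      exact (hβiff _ k).2 ⟨by simp, by simp; omega⟩
    · intro x y hx hy hxy
      have := Fin.val_eq_of_eq hxy
      simp only at this
      omega
  have key : ∀ (A : Matrix (Fin N) (Fin N) ℝ) (m : Fin N),
      (∑ p ∈ Finset.univ.filter (fun p => m ≤ p),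
        (Matrix.diagonal (fun q => ∑ r, A q r) - A) m p)
      = ∑ p ∈ Finset.univ.filter (fun p => p < m), A m p := by
    intro A m
    simp only [Matrix.sub_apply]
    rw [Finset.sum_sub_distrib]
    have h1 : ∑ p ∈ Finset.univ.filter (fun p => m ≤ p),
        Matrix.diagonal (fun q => ∑ r, A q r) m p = ∑ r, A m r := by
      rw [Finset.sum_eq_single_of_mem m (by simp)]
      · simp [Matrix.diagonal]
      · intro p _ hpm
        exact Matrix.diagonal_apply_ne _ (Ne.symm hpm)
    rw [h1]
    have h2 := Finset.sum_filter_add_sum_filter_not Finset.univ (fun p => m ≤ p)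
      (fun p => A m p)
    have h3 : Finset.univ.filter (fun p => ¬ m ≤ p) = Finset.univ.filter (fun p => p < m) := by
      simp [not_le]
    rw [h3] at h2
    linarith
  have hv' : ∀ m, v m = ∑ p ∈ Finset.univ.filter (fun p => p < m), W m p := by
    intro m
    rw [hv m, hL, hD]
    exact key W m
  have hvt' : ∀ m, vt m = ∑ p ∈ Finset.univ.filter (fun p => p < m), Wt m p := by
    intro m
    rw [hvt m, hLt, hDt]
    exact key Wt m
  intro m
  refine ⟨?_, ?_, ?_⟩
  · -- β m < i
    intro hmi
    rw [hv', hvt']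
    apply Finset.sum_congr rfl
    intro p hp
    simp only [Finset.mem_filter, Finset.mem_univ, true_and] at hp
    have hbp : β p ≤ β m := hmono' p m hp.le
    rw [hWt m p]
    by_cases hb : β m = β p
    · rw [if_pos hb]
    · rw [if_neg hb, if_neg (ne_of_lt hmi), if_neg (ne_of_lt (lt_of_le_of_lt hbp hmi)),
        hW m p]
      simp [hb]
  · -- i < β m
    intro him
    rw [hv', hvt']
    have hsplit : ∀ p ∈ Finset.univ.filter (fun p => p < m),
        Wt m p = W m p + (if β p = i then wt (β m) else 0) := by
      intro p hp
      simp only [Finset.mem_filter, Finset.mem_univ, true_and] at hp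
      rw [hWt m p]
      by_cases hb : β m = β p
      · rw [if_pos hb, if_neg (by rw [← hb]; exact ne_of_gt him)]
        ring
      · rw [if_neg hb, if_neg (ne_of_gt him)]
        by_cases hpi : β p = i
        · rw [if_pos hpi, hW m p]
          simp [hb]
        · rw [if_neg hpi, hW m p]
          simp [hb]
    rw [Finset.sum_congr rfl hsplit, Finset.sum_add_distrib]
    congr 1
    have hzero : ∀ p ∈ Finset.univ, p ∉ Finset.univ.filter (fun p : Fin N => p < m) →
        (if β p = i then wt (β m) else 0) = 0 := by
      intro p _ hp
      simp only [Finset.mem_filter, Finset.mem_univ, true_and, not_lt] at hp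
      have hle : β m ≤ β p := hmono' m p hp
      refine if_neg (fun h => ?_)
      rw [h] at hle
      exact absurd hle (not_le.2 him)
    rw [Finset.sum_subset (Finset.filter_subset _ _) hzero, ← Finset.sum_filter,
      Finset.sum_const, hcard i, nsmul_eq_mul]
  · -- β m = i
    intro hmi
    rw [hv', hvt']
    have hsplit : ∀ p ∈ Finset.univ.filter (fun p => p < m),
        Wt m p = W m p + (if β p < i then wt (β p) else 0) := by
      intro p hp
      simp only [Finset.mem_filter, Finset.mem_univ, true_and] at hp
      have hbp : β p ≤ β m := hmono' p m hp.le
      rw [hWt m p]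
      by_cases hb : β m = β p
      · rw [if_pos hb, if_neg (by rw [← hb, hmi]; exact lt_irrefl i)]
        ring
      · have hpi : β p < i := lt_of_le_of_ne (hmi ▸ hbp) (fun h => hb (by rw [hmi, h]))
        rw [if_neg hb, if_pos hmi, if_pos hpi, hW m p]
        simp [hb]
    rw [Finset.sum_congr rfl hsplit, Finset.sum_add_distrib]
    congr 1
    have hzero : ∀ p ∈ Finset.univ, p ∉ Finset.univ.filter (fun p : Fin N => p < m) →
        (if β p < i then wt (β p) else 0) = 0 := by
      intro p _ hp
      simp only [Finset.mem_filter, Finset.mem_univ, true_and, not_lt] at hp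
      have hle : β m ≤ β p := hmono' m p hp
      rw [hmi] at hle
      rw [if_neg (not_lt.2 hle)]
    rw [Finset.sum_subset (Finset.filter_subset _ _) hzero,
      ← Finset.sum_fiberwise Finset.univ β (fun p => if β p < i then wt (β p) else 0)]
    conv_rhs => rw [Finset.sum_filter]
    apply Finset.sum_congr rfl
    intro k _
    have hc : ∀ p ∈ Finset.univ.filter (fun p : Fin N => β p = k),
        (if β p < i then wt (β p) else 0) = if k < i then wt k else 0 := by
      intro p hp
      simp only [Finset.mem_filter, Finset.mem_univ, true_and] at hp
      rw [hp]
    rw [Finset.sum_congr rfl hc, Finset.sum_const, hcard k]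
    by_cases hk : k < i
    · rw [if_pos hk, if_pos hk, nsmul_eq_mul]
    · rw [if_neg hk, if_neg hk, smul_zero]
end

section
/- For the fully group-similarity corrupted affinity matrix W̃ in which every pair of distinct blocks i ≠ j has similarity w̃_{i,j} = w̃_{j,i}, the corrupted vector ṽ is the piece-wise linear function given by ṽ_m = Σ_{k=1}^{i−1} N_k w̃_{k,i} + (m − ℓ_i) w_i for every i = 1, …, K and every index m with ℓ_i ≤ m ≤ u_i. -/
/-! Because `D̃` carries the full row sums, the tail sum `∑_{p ≥ m} L̃[m,p]` collapses to the head
sum `∑_{p < m} W̃[m,p]`. The indices before `m` are all of the earlier blocks `k < i`, each giving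
`N_k` entries `w̃_{i,k} = w̃_{k,i}`, together with the first `m − ℓ_i` indices of block `i`, each
giving `w_i`. -/

open Finset

theorem Matrix.sum_filter_le_diagonal_sum_sub_apply {ι R : Type*} [Fintype ι] [LinearOrder ι]
    [AddCommGroup R] (A : Matrix ι ι R) (m : ι) :
    ∑ p ∈ univ.filter (m ≤ ·), (Matrix.diagonal (fun q => ∑ r, A q r) - A) m p =
      ∑ p ∈ univ.filter (· < m), A m p := by
  have hdiag : ∑ p ∈ univ.filter (m ≤ ·), Matrix.diagonal (fun q => ∑ r, A q r) m p =
      ∑ r, A m r := by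
    rw [sum_eq_single_of_mem m (by simp) fun p _ hp => Matrix.diagonal_apply_ne _ hp.symm]
    exact Matrix.diagonal_apply_eq _ _
  simp only [Matrix.sub_apply, sum_sub_distrib, hdiag, sub_eq_iff_eq_add]
  rw [← sum_filter_add_sum_filter_not univ (m ≤ ·)]
  simp only [not_le, add_comm]

theorem Fin.card_filter_le_val_lt {N a b : ℕ} (hb : b ≤ N) :
    #(univ.filter fun p : Fin N => a ≤ p.val ∧ p.val < b) = b - a := by
  rw [show (univ.filter fun p : Fin N => a ≤ p.val ∧ p.val < b) =
      (Ico a b).attachFin (fun p hp => (mem_Ico.1 hp).2.trans_le hb) by ext; simp,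
    card_attachFin, Nat.card_Ico]

section Blocks

variable {ι : Type*} [Fintype ι] [LinearOrder ι] (n : ι → ℕ)

def blockStart (j : ι) : ℕ := ∑ k ∈ univ.filter (· < j), n k

theorem blockStart_add_le_of_lt {j j' : ι} (h : j < j') :
    blockStart n j + n j ≤ blockStart n j' := by
  have hsub : insert j (univ.filter (· < j)) ⊆ univ.filter (· < j') := by
    intro k hk
    simp only [mem_insert, mem_filter, mem_univ, true_and] at hk ⊢
    rcases hk with rfl | hk
    exacts [h, hk.trans h]
  simpa [blockStart, sum_insert, add_comm] using sum_le_sum_of_subset (f := n) hsub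

variable {N : ℕ} {β : Fin N → ι}
  (hβ : ∀ p : Fin N, blockStart n (β p) ≤ p.val ∧ p.val < blockStart n (β p) + n (β p))
include hβ

theorem block_le_of_le {p m : Fin N} (h : p ≤ m) : β p ≤ β m := by
  by_contra! hlt
  have := blockStart_add_le_of_lt n hlt
  have := hβ p
  have := hβ m
  have : p.val ≤ m.val := h
  omega

theorem block_eq_iff (p : Fin N) (j : ι) :
    β p = j ↔ blockStart n j ≤ p.val ∧ p.val < blockStart n j + n j := by
  refine ⟨fun h => h ▸ hβ p, fun hp => ?_⟩
  have := hβ p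
  rcases lt_trichotomy (β p) j with hlt | heq | hgt
  · have := blockStart_add_le_of_lt n hlt
    omega
  · exact heq
  · have := blockStart_add_le_of_lt n hgt
    omega

theorem card_filter_block_eq_of_lt {m : Fin N} {j : ι} (hj : j < β m) :
    #(univ.filter (β · = j)) = n j := by
  have := blockStart_add_le_of_lt n hj
  have := hβ m
  simp_rw [block_eq_iff n hβ]
  rw [Fin.card_filter_le_val_lt (by omega)]
  omega

theorem card_filter_lt_filter_block_eq (m : Fin N) :
    #((univ.filter (· < m)).filter (β · = β m)) = m.val - blockStart n (β m) := by
  have := hβ m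
  rw [filter_filter, ← Fin.card_filter_le_val_lt m.isLt.le]
  congr 1
  ext p
  simp only [mem_filter, mem_univ, true_and, block_eq_iff n hβ p, Fin.lt_def]
  omega

theorem sum_filter_lt_eq_sum_blocks {R : Type*} [AddCommMonoid R] (f : Fin N → R) (m : Fin N) :
    ∑ p ∈ univ.filter (· < m), f p =
      ∑ j ∈ univ.filter (· < β m), ∑ p ∈ univ.filter (β · = j), f p +
        ∑ p ∈ (univ.filter (· < m)).filter (β · = β m), f p := by
  have hmaps :
      ∀ p ∈ univ.filter (· < m), β p ∈ insert (β m) (univ.filter (· < β m)) := by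
    intro p hp
    simpa [le_iff_eq_or_lt] using block_le_of_le n hβ (mem_filter.1 hp).2.le
  rw [← sum_fiberwise_of_maps_to hmaps, sum_insert (by simp), add_comm]
  congr 1
  refine sum_congr rfl fun j hj => ?_
  congr 1
  ext p
  simp only [mem_filter, mem_univ, true_and, and_iff_right_iff_imp]
  rintro rfl
  exact lt_of_not_ge fun h => (mem_filter.1 hj).2.not_ge (block_le_of_le n hβ h)

end Blocks

theorem fullGroupSim_vector_v_piecewise_linear_general
    (K : ℕ)
    (n : Fin K → ℕ)
    (w : Fin K → ℝ)
    (N : ℕ)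
    (β : Fin N → Fin K)
    (hβ : ∀ m : Fin N,
      (∑ k ∈ Finset.univ.filter (fun k => k < β m), n k) ≤ m.val ∧
      m.val < (∑ k ∈ Finset.univ.filter (fun k => k < β m), n k) + n (β m))
    (W : Matrix (Fin N) (Fin N) ℝ)
    (hW : ∀ m p, W m p = if m ≠ p ∧ β m = β p then w (β m) else 0)
    (wt : Fin K → Fin K → ℝ)
    (hwtsymm : ∀ i j, wt i j = wt j i)
    (Wt : Matrix (Fin N) (Fin N) ℝ)
    (hWt : ∀ m p, Wt m p = if β m = β p then W m p else wt (β m) (β p))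
    (Dt : Matrix (Fin N) (Fin N) ℝ)
    (hDt : Dt = Matrix.diagonal (fun m => ∑ p, Wt m p))
    (Lt : Matrix (Fin N) (Fin N) ℝ)
    (hLt : Lt = Dt - Wt)
    (vt : Fin N → ℝ)
    (hvt : ∀ m : Fin N, vt m = ∑ p ∈ Finset.univ.filter (fun p => m ≤ p), Lt m p) :
    ∀ m : Fin N,
      vt m =
        (∑ k ∈ Finset.univ.filter (fun k => k < β m), (n k : ℝ) * wt k (β m)) +
          ((m.val : ℝ) -
              ((∑ k ∈ Finset.univ.filter (fun k => k < β m), n k : ℕ) : ℝ)) * w (β m) := by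
  intro m
  have hblock (p : Fin N) (hp : β p = β m) (hpm : p < m) : Wt m p = w (β m) := by
    rw [hWt, if_pos hp.symm, hW, if_pos ⟨hpm.ne', hp.symm⟩]
  have hcross (p : Fin N) (j : Fin K) (hp : β p = j) (hj : j < β m) : Wt m p = wt j (β m) := by
    rw [hWt, if_neg (hp ▸ hj.ne'), hp, hwtsymm]
  rw [hvt, hLt, hDt, Matrix.sum_filter_le_diagonal_sum_sub_apply,
    sum_filter_lt_eq_sum_blocks n hβ]
  congr 1
  · refine sum_congr rfl fun j hj => ?_
    have hj : j < β m := (mem_filter.1 hj).2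
    rw [sum_congr rfl fun p hp => hcross p j (mem_filter.1 hp).2 hj, sum_const,
      card_filter_block_eq_of_lt n hβ hj, nsmul_eq_mul]
  · have hstart : blockStart n (β m) ≤ m.val := (hβ m).1
    rw [sum_congr rfl fun p hp => hblock p (mem_filter.1 hp).2 (mem_filter.1 (mem_filter.1 hp).1).2,
      sum_const, card_filter_lt_filter_block_eq n hβ, nsmul_eq_mul, Nat.cast_sub hstart]
    rfl

/-- For the fully group-similarity corrupted affinity matrix `W̃` in which
every pair of distinct blocks `i ≠ j` has similarity `w̃ i j = w̃ j i`, the corrupted vector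
`ṽ` is the piece-wise linear function given (in 0-based indexing) by
`ṽ m = ∑_{k < i} n k * w̃ k i + (m − ℓ i) * w i` for every block `i` and every index `m`
in block `i`, where `ℓ i = ∑_{k < i} n k`. -/
theorem fullGroupSim_vector_v_piecewise_linear
    (K : ℕ) (hK : 1 ≤ K)
    (n : Fin K → ℕ) (hn : ∀ i, 2 ≤ n i)
    (w : Fin K → ℝ) (hw : ∀ i, 0 < w i)
    (N : ℕ) (hN : N = ∑ i, n i)
    (β : Fin N → Fin K)
    (hβ : ∀ m : Fin N,
      (∑ k ∈ Finset.univ.filter (fun k => k < β m), n k) ≤ m.val ∧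
      m.val < (∑ k ∈ Finset.univ.filter (fun k => k < β m), n k) + n (β m))
    (W : Matrix (Fin N) (Fin N) ℝ)
    (hW : ∀ m p, W m p = if m ≠ p ∧ β m = β p then w (β m) else 0)
    (wt : Fin K → Fin K → ℝ)
    (hwtsymm : ∀ i j, wt i j = wt j i)
    (hwtpos : ∀ i j, i ≠ j → 0 < wt i j)
    (Wt : Matrix (Fin N) (Fin N) ℝ)
    (hWt : ∀ m p, Wt m p = if β m = β p then W m p else wt (β m) (β p))
    (Dt : Matrix (Fin N) (Fin N) ℝ)
    (hDt : Dt = Matrix.diagonal (fun m => ∑ p, Wt m p))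
    (Lt : Matrix (Fin N) (Fin N) ℝ)
    (hLt : Lt = Dt - Wt)
    (vt : Fin N → ℝ)
    (hvt : ∀ m : Fin N, vt m = ∑ p ∈ Finset.univ.filter (fun p => m ≤ p), Lt m p) :
    ∀ m : Fin N,
      vt m =
        (∑ k ∈ Finset.univ.filter (fun k => k < β m), (n k : ℝ) * wt k (β m)) +
          ((m.val : ℝ) -
              ((∑ k ∈ Finset.univ.filter (fun k => k < β m), n k : ℕ) : ℝ)) * w (β m) :=
  fullGroupSim_vector_v_piecewise_linear_general K n w N β hβ W hW wt hwtsymm Wt hWt Dt hDt Lt hLt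
    vt hvt
end

section
/- For the Type II outlier-corrupted affinity matrix W̃ and each j = 1, …, K, the value N_j w_j + w̃_j is a (standard) eigenvalue of the corrupted Laplacian L̃ with geometric multiplicity at least N_j − 1; that is, the kernel of L̃ − (N_j w_j + w̃_j)·I has dimension at least N_j − 1. -/
/-!
Inside block `j` the vertices are interchangeable: each is joined with weight `w j` to the other
`n j - 1` vertices of its block and with weight `w̃ j` to the outlier, and to nothing else. Hence
its degree is `(n j - 1) w j + w̃ j`, and after the shift by `n j w j + w̃ j` all columns of the
Laplacian indexed by block `j` coincide (the diagonal entry `-w j` matches the off-diagonal ones).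
So `e_a - e_b` lies in the kernel for `a, b` in the block, giving `n j - 1` independent vectors.
-/

open Finset

theorem Matrix.card_sub_one_le_finrank_ker_toLin' {R m ι : Type*} [Field R] [Fintype ι]
    [DecidableEq ι] (M : Matrix m ι R) (S : Finset ι)
    (hS : ∀ a ∈ S, ∀ b ∈ S, M.col a = M.col b) :
    #S - 1 ≤ Module.finrank R (LinearMap.ker M.toLin') := by
  rcases S.eq_empty_or_nonempty with rfl | ⟨a₀, ha₀⟩
  · simp
  have hker (a : S.erase a₀) : Pi.single (a : ι) 1 - Pi.single a₀ 1 ∈ LinearMap.ker M.toLin' := by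
    rw [LinearMap.mem_ker, Matrix.toLin'_apply, Matrix.mulVec_sub, Matrix.mulVec_single_one,
      Matrix.mulVec_single_one, hS a (mem_of_mem_erase a.2) a₀ ha₀, sub_self]
  let v (a : S.erase a₀) : LinearMap.ker M.toLin' := ⟨_, hker a⟩
  -- restricting to the coordinates `S \ {a₀}` sends `v` to the standard basis
  let restrict := LinearMap.funLeft R R ((↑) : S.erase a₀ → ι) ∘ₗ (LinearMap.ker M.toLin').subtype
  have hv : LinearIndependent R v := by
    refine .of_comp restrict ?_
    convert (Pi.basisFun R (S.erase a₀)).linearIndependent using 1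
    ext a b
    have hb : (b : ι) ≠ a₀ := ne_of_mem_erase b.2
    rw [Pi.basisFun_apply]
    simp only [restrict, v, Function.comp_apply, LinearMap.comp_apply, Submodule.subtype_apply,
      LinearMap.funLeft_apply, Pi.sub_apply, Pi.single_apply,
      Subtype.ext_iff, if_neg hb, sub_zero]
  rw [← card_erase_of_mem ha₀, ← Fintype.card_coe]
  exact hv.fintype_card_le_finrank

theorem Fintype.card_fiber_eq_of_le_of_card_eq {ι κ : Type*} [Fintype ι] [Fintype κ]
    [DecidableEq κ] (β : ι → κ) (n : κ → ℕ) (hle : ∀ k, #{i | β i = k} ≤ n k)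
    (hcard : Fintype.card ι = ∑ k, n k) (k : κ) : #{i | β i = k} = n k := by
  have hsum : ∑ k, #{i | β i = k} = ∑ k, n k := by
    rw [← hcard, ← card_univ, card_eq_sum_card_fiberwise fun i _ => mem_univ (β i)]
  exact (sum_eq_sum_iff_of_le fun k _ => hle k).1 hsum k (mem_univ k)

theorem card_fiber_eq_of_mem_Ico_partialSum {K N : ℕ} (n : Fin K → ℕ) (hN : N = ∑ i, n i)
    (β : Fin N → Fin K)
    (hβ : ∀ m : Fin N,
      (∑ k ∈ Finset.univ.filter (fun k => k < β m), n k) ≤ m.val ∧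
      m.val < (∑ k ∈ Finset.univ.filter (fun k => k < β m), n k) + n (β m))
    (j : Fin K) : #{m | β m = j} = n j := by
  refine Fintype.card_fiber_eq_of_le_of_card_eq β n (fun j => ?_) (by simp [hN]) j
  set s := ∑ k ∈ Finset.univ.filter (fun k => k < j), n k
  calc #{m | β m = j} ≤ #(Ico s (s + n j)) := by
        refine card_le_card_of_injOn Fin.val (fun m hm => ?_) Fin.val_injective.injOn
        obtain rfl : β m = j := (mem_filter.1 hm).2
        exact mem_Ico.2 (hβ m)
    _ = n j := by simp

variable {K N : ℕ} {n : Fin K → ℕ} {w wt : Fin K → ℝ} {β : Fin N → Fin K}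
  {W : Matrix (Fin N) (Fin N) ℝ} {Wt : Matrix (Fin (N + 1)) (Fin (N + 1)) ℝ}

theorem sum_typeII_row_castSucc
    (hW : ∀ m p, W m p = if m ≠ p ∧ β m = β p then w (β m) else 0)
    (hWt1 : ∀ a b : Fin N, Wt a.castSucc b.castSucc = W a b)
    (hWt3 : ∀ a : Fin N, Wt a.castSucc (Fin.last N) = wt (β a))
    (hblock : ∀ j, #{m | β m = j} = n j) (a : Fin N) :
    ∑ q, Wt a.castSucc q = ((n (β a) : ℝ) - 1) * w (β a) + wt (β a) := by
  have hterm (b : Fin N) :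
      W a b + (if a = b then w (β a) else 0) = if β b = β a then w (β a) else 0 := by
    by_cases hab : a = b
    · simp [hW, hab]
    · simp [hW, hab, eq_comm]
  have hrow : ∑ b, W a b + w (β a) = n (β a) * w (β a) := by
    calc ∑ b, W a b + w (β a) = ∑ b, (W a b + if a = b then w (β a) else 0) := by
          rw [sum_add_distrib, sum_ite_eq, if_pos (mem_univ a)]
      _ = ∑ b, if β b = β a then w (β a) else 0 := sum_congr rfl fun b _ => hterm b
      _ = n (β a) * w (β a) := by rw [← sum_filter, sum_const, hblock, nsmul_eq_mul]
  rw [Fin.sum_univ_castSucc, hWt3]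
  simp only [hWt1]
  linarith

theorem typeII_shifted_laplacian_last_castSucc
    (hWt2 : ∀ a : Fin N, Wt (Fin.last N) a.castSucc = wt (β a)) (μ : ℝ) (a : Fin N) :
    (Matrix.diagonal (fun m => ∑ q, Wt m q) - Wt - μ • 1) (Fin.last N) a.castSucc
      = -wt (β a) := by
  simp [Matrix.one_apply_ne (Fin.castSucc_ne_last a).symm,
    Matrix.diagonal_apply_ne _ (Fin.castSucc_ne_last a).symm, hWt2]

theorem typeII_shifted_laplacian_castSucc_castSucc
    (hW : ∀ m p, W m p = if m ≠ p ∧ β m = β p then w (β m) else 0)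
    (hWt1 : ∀ a b : Fin N, Wt a.castSucc b.castSucc = W a b)
    (hWt3 : ∀ a : Fin N, Wt a.castSucc (Fin.last N) = wt (β a))
    (hblock : ∀ j, #{m | β m = j} = n j) (c a : Fin N) :
    (Matrix.diagonal (fun m => ∑ q, Wt m q) - Wt - (n (β a) * w (β a) + wt (β a)) • 1)
      c.castSucc a.castSucc = -(if β c = β a then w (β a) else 0) := by
  by_cases hca : c = a
  · subst hca
    simp only [Matrix.sub_apply, Matrix.diagonal_apply_eq,
      sum_typeII_row_castSucc hW hWt1 hWt3 hblock, hWt1, hW, ne_eq, not_true_eq_false, and_true,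
      ↓reduceIte, sub_zero, Matrix.smul_apply, Matrix.one_apply_eq, smul_eq_mul, mul_one]
    ring
  · by_cases hβca : β c = β a <;> simp [Matrix.one_apply_ne, hca, hβca, hWt1, hW]

theorem typeII_shifted_laplacian_col_eq
    (hW : ∀ m p, W m p = if m ≠ p ∧ β m = β p then w (β m) else 0)
    (hWt1 : ∀ a b : Fin N, Wt a.castSucc b.castSucc = W a b)
    (hWt2 : ∀ a : Fin N, Wt (Fin.last N) a.castSucc = wt (β a))
    (hWt3 : ∀ a : Fin N, Wt a.castSucc (Fin.last N) = wt (β a))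
    (hblock : ∀ j, #{m | β m = j} = n j) {a b : Fin N} (hab : β a = β b) :
    (Matrix.diagonal (fun m => ∑ q, Wt m q) - Wt - (n (β a) * w (β a) + wt (β a)) • 1).col
      a.castSucc =
    (Matrix.diagonal (fun m => ∑ q, Wt m q) - Wt - (n (β a) * w (β a) + wt (β a)) • 1).col
      b.castSucc := by
  ext p
  induction p using Fin.lastCases with
  | last => simp only [Matrix.col_apply, typeII_shifted_laplacian_last_castSucc hWt2, hab]
  | cast c =>
    rw [Matrix.col_apply, Matrix.col_apply,
      typeII_shifted_laplacian_castSucc_castSucc hW hWt1 hWt3 hblock, hab,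
      typeII_shifted_laplacian_castSucc_castSucc hW hWt1 hWt3 hblock]

theorem typeII_standard_eigenvalue_multiplicity_general
    (K : ℕ)
    (n : Fin K → ℕ)
    (w : Fin K → ℝ)
    (N : ℕ) (hN : N = ∑ i, n i)
    (β : Fin N → Fin K)
    (hβ : ∀ m : Fin N,
      (∑ k ∈ Finset.univ.filter (fun k => k < β m), n k) ≤ m.val ∧
      m.val < (∑ k ∈ Finset.univ.filter (fun k => k < β m), n k) + n (β m))
    (W : Matrix (Fin N) (Fin N) ℝ)
    (hW : ∀ m p, W m p = if m ≠ p ∧ β m = β p then w (β m) else 0)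
    (wt : Fin K → ℝ)
    (Wt : Matrix (Fin (N + 1)) (Fin (N + 1)) ℝ)
    (hWt1 : ∀ a b : Fin N, Wt a.castSucc b.castSucc = W a b)
    (hWt2 : ∀ a : Fin N, Wt (Fin.last N) a.castSucc = wt (β a))
    (hWt3 : ∀ a : Fin N, Wt a.castSucc (Fin.last N) = wt (β a))
    (Dt : Matrix (Fin (N + 1)) (Fin (N + 1)) ℝ)
    (hDt : Dt = Matrix.diagonal (fun m => ∑ q, Wt m q))
    (Lt : Matrix (Fin (N + 1)) (Fin (N + 1)) ℝ)
    (hLt : Lt = Dt - Wt) :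
    ∀ j : Fin K,
      n j - 1 ≤
        Module.finrank ℝ
          ↥(LinearMap.ker
            (Matrix.toLin'
              (Lt - ((n j : ℝ) * w j + wt j) •
                (1 : Matrix (Fin (N + 1)) (Fin (N + 1)) ℝ)))) := by
  intro j
  have hblock := card_fiber_eq_of_mem_Ico_partialSum n hN β hβ
  subst hDt hLt
  set M : Matrix (Fin (N + 1)) (Fin (N + 1)) ℝ :=
    Matrix.diagonal (fun m => ∑ q, Wt m q) - Wt - ((n j : ℝ) * w j + wt j) • 1
  let S : Finset (Fin (N + 1)) := ({m | β m = j} : Finset (Fin N)).map Fin.castSuccEmb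
  have hS : ∀ a ∈ S, ∀ b ∈ S, M.col a = M.col b := by
    simp only [S, mem_map, mem_filter, mem_univ, true_and, Fin.coe_castSuccEmb]
    rintro _ ⟨a, rfl, rfl⟩ _ ⟨b, hb, rfl⟩
    exact typeII_shifted_laplacian_col_eq hW hWt1 hWt2 hWt3 hblock hb.symm
  calc n j - 1 = #S - 1 := by simp [S, hblock]
    _ ≤ _ := M.card_sub_one_le_finrank_ker_toLin' S hS

/-- For the Type II outlier-corrupted affinity matrix `W̃` and each block `j`,
the value `n j * w j + w̃ j` is a (standard) eigenvalue of the corrupted Laplacian `L̃` with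
geometric multiplicity at least `n j - 1`; that is, the kernel of
`L̃ - (n j * w j + w̃ j) • I` has dimension at least `n j - 1`. -/
theorem typeII_standard_eigenvalue_multiplicity
    (K : ℕ) (hK : 1 ≤ K)
    (n : Fin K → ℕ) (hn : ∀ i, 2 ≤ n i)
    (w : Fin K → ℝ) (hw : ∀ i, 0 < w i)
    (N : ℕ) (hN : N = ∑ i, n i)
    (β : Fin N → Fin K)
    (hβ : ∀ m : Fin N,
      (∑ k ∈ Finset.univ.filter (fun k => k < β m), n k) ≤ m.val ∧
      m.val < (∑ k ∈ Finset.univ.filter (fun k => k < β m), n k) + n (β m))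
    (W : Matrix (Fin N) (Fin N) ℝ)
    (hW : ∀ m p, W m p = if m ≠ p ∧ β m = β p then w (β m) else 0)
    (wt : Fin K → ℝ) (hwt : ∀ j, 0 < wt j)
    (Wt : Matrix (Fin (N + 1)) (Fin (N + 1)) ℝ)
    (hWt1 : ∀ a b : Fin N, Wt a.castSucc b.castSucc = W a b)
    (hWt2 : ∀ a : Fin N, Wt (Fin.last N) a.castSucc = wt (β a))
    (hWt3 : ∀ a : Fin N, Wt a.castSucc (Fin.last N) = wt (β a))
    (hWt4 : Wt (Fin.last N) (Fin.last N) = 0)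
    (Dt : Matrix (Fin (N + 1)) (Fin (N + 1)) ℝ)
    (hDt : Dt = Matrix.diagonal (fun m => ∑ q, Wt m q))
    (Lt : Matrix (Fin (N + 1)) (Fin (N + 1)) ℝ)
    (hLt : Lt = Dt - Wt) :
    ∀ j : Fin K,
      n j - 1 ≤
        Module.finrank ℝ
          ↥(LinearMap.ker
            (Matrix.toLin'
              (Lt - ((n j : ℝ) * w j + wt j) •
                (1 : Matrix (Fin (N + 1)) (Fin (N + 1)) ℝ)))) :=
  typeII_standard_eigenvalue_multiplicity_general K n w N hN β hβ W hW wt Wt hWt1 hWt2 hWt3 Dt hDt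
    Lt hLt
end

section
/- For the group-similarity corrupted affinity matrix W̃ and each block j ≠ i, the value N_j w_j + N_i w̃_{i,j} is a (standard) eigenvalue of the corrupted Laplacian L̃ with geometric multiplicity at least N_j − 1; that is, the kernel of L̃ − (N_j w_j + N_i w̃_{i,j})·I has dimension at least N_j − 1. -/
/-- For the group-similarity corrupted affinity matrix `W̃` and each block
`j ≠ i`, the value `n j * w j + n i * w̃ i j` is a (standard) eigenvalue of the corrupted
Laplacian `L̃` with geometric multiplicity at least `n j - 1`; that is, the kernel of
`L̃ - (n j * w j + n i * w̃ i j) • I` has dimension at least `n j - 1`. -/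
theorem groupSim_standard_eigenvalue_other_blocks
    (K : ℕ) (hK : 2 ≤ K)
    (n : Fin K → ℕ) (hn : ∀ i, 2 ≤ n i)
    (w : Fin K → ℝ) (hw : ∀ i, 0 < w i)
    (N : ℕ) (hN : N = ∑ i, n i)
    (β : Fin N → Fin K)
    (hβ : ∀ m : Fin N,
      (∑ k ∈ Finset.univ.filter (fun k => k < β m), n k) ≤ m.val ∧
      m.val < (∑ k ∈ Finset.univ.filter (fun k => k < β m), n k) + n (β m))
    (W : Matrix (Fin N) (Fin N) ℝ)
    (hW : ∀ m p, W m p = if m ≠ p ∧ β m = β p then w (β m) else 0)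
    (i : Fin K)
    (wt : Fin K → ℝ) (hwt : ∀ j, j ≠ i → 0 < wt j)
    (Wt : Matrix (Fin N) (Fin N) ℝ)
    (hWt : ∀ m p, Wt m p =
      if β m = β p then W m p
      else if β m = i then wt (β p)
      else if β p = i then wt (β m)
      else 0)
    (Dt : Matrix (Fin N) (Fin N) ℝ)
    (hDt : Dt = Matrix.diagonal (fun m => ∑ p, Wt m p))
    (Lt : Matrix (Fin N) (Fin N) ℝ)
    (hLt : Lt = Dt - Wt) :
    ∀ j : Fin K, j ≠ i →
      n j - 1 ≤
        Module.finrank ℝ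
          ↥(LinearMap.ker
            (Matrix.toLin'
              (Lt - ((n j : ℝ) * w j + (n i : ℝ) * wt j) •
                (1 : Matrix (Fin N) (Fin N) ℝ)))) := by
  intro j hji
  set S : Fin K → ℕ := fun k => ∑ l ∈ Finset.univ.filter (fun l => l < k), n l with hSdef
  have hSle : ∀ a b : Fin K, a < b → S a + n a ≤ S b := by
    intro a b hab
    have hnot : a ∉ Finset.univ.filter (fun l => l < a) := by simp
    have hsub : insert a (Finset.univ.filter (fun l => l < a)) ⊆
        Finset.univ.filter (fun l => l < b) := by
      intro x hx
      simp only [Finset.mem_insert, Finset.mem_filter, Finset.mem_univ, true_and] at hx ⊢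
      rcases hx with rfl | hx
      · exact hab
      · exact hx.trans hab
    calc S a + n a = ∑ l ∈ insert a (Finset.univ.filter (fun l => l < a)), n l := by
          rw [Finset.sum_insert hnot]; simp only [hSdef]; omega
      _ ≤ S b := Finset.sum_le_sum_of_subset hsub
  have hSN : ∀ k : Fin K, S k + n k ≤ N := by
    intro k
    have hnot : k ∉ Finset.univ.filter (fun l => l < k) := by simp
    have hsub : insert k (Finset.univ.filter (fun l => l < k)) ⊆ Finset.univ :=
      Finset.subset_univ _
    calc S k + n k = ∑ l ∈ insert k (Finset.univ.filter (fun l => l < k)), n l := by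
          rw [Finset.sum_insert hnot]; simp only [hSdef]; omega
      _ ≤ ∑ l, n l := Finset.sum_le_sum_of_subset hsub
      _ = N := hN.symm
  have hiff : ∀ (k : Fin K) (m : Fin N), β m = k ↔ S k ≤ m.val ∧ m.val < S k + n k := by
    intro k m
    constructor
    · rintro rfl; exact hβ m
    · rintro ⟨h1, h2⟩
      have hm : S (β m) ≤ m.val ∧ m.val < S (β m) + n (β m) := hβ m
      rcases lt_trichotomy (β m) k with h | h | h
      · have := hSle (β m) k h; omega
      · exact h
      · have := hSle k (β m) h; omega
  have hcard : ∀ k : Fin K, (Finset.univ.filter (fun p : Fin N => β p = k)).card = n k := by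
    intro k
    have himg : Finset.univ.filter (fun p : Fin N => β p = k) =
        Finset.image (fun t : Fin (n k) =>
          (⟨S k + t.val, by have := hSN k; have := t.isLt; omega⟩ : Fin N)) Finset.univ := by
      ext p
      simp only [Finset.mem_filter, Finset.mem_image, Finset.mem_univ, true_and]
      rw [hiff k p]
      constructor
      · rintro ⟨h1, h2⟩
        exact ⟨⟨p.val - S k, by omega⟩, by apply Fin.ext; simp; try omega⟩
      · rintro ⟨t, rfl⟩
        have := t.isLt
        constructor
        · simp
        · simp
    rw [himg, Finset.card_image_of_injective _ ?_, Finset.card_univ, Fintype.card_fin]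
    intro s t h
    have hv : S k + s.val = S k + t.val := congrArg Fin.val h
    exact Fin.ext (by omega)
  have hM : 2 ≤ n j := hn j
  have haN : ∀ t : ℕ, t < n j → S j + t < N := fun t ht => by have := hSN j; omega
  set a : Fin (n j - 1) → Fin N :=
    (fun t => ⟨S j + t.val, haN _ (by have := t.isLt; omega)⟩) with hadef
  set b : Fin N := ⟨S j + (n j - 1), haN _ (by omega)⟩ with hbdef
  have hβa : ∀ t, β (a t) = j := by
    intro t
    rw [hiff j (a t)]
    have := t.isLt
    constructor
    · simp [hadef]
    · simp [hadef]; omega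
  have hβb : β b = j := by
    rw [hiff j b]
    constructor
    · simp [hbdef]
    · simp [hbdef]; omega
  have hab : ∀ t, a t ≠ b := by
    intro t h
    have hv : S j + t.val = S j + (n j - 1) := congrArg Fin.val h
    have := t.isLt; omega
  have hainj : Function.Injective a := by
    intro s t h
    have hv : S j + s.val = S j + t.val := congrArg Fin.val h
    exact Fin.ext (by omega)
  -- Wt facts
  have hWtdiag : ∀ m : Fin N, Wt m m = 0 := by
    intro m; rw [hWt]; simp [hW]
  have hWtjj : ∀ m p : Fin N, β m = j → β p = j → m ≠ p → Wt m p = w j := by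
    intro m p hm hp hmp
    rw [hWt, if_pos (by rw [hm, hp]), hW, if_pos ⟨hmp, by rw [hm, hp]⟩, hm]
  have hWtij : ∀ m p : Fin N, β m = i → β p = j → Wt m p = wt j := by
    intro m p hm hp
    rw [hWt, if_neg (by rw [hm, hp]; exact fun h => hji h.symm), if_pos hm, hp]
  have hWt0 : ∀ m p : Fin N, β m ≠ j → β m ≠ i → β p = j → Wt m p = 0 := by
    intro m p hmj hmi hp
    rw [hWt, if_neg (by rw [hp]; exact hmj), if_neg hmi, if_neg (by rw [hp]; exact hji)]
  -- the row sum of block j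
  have hrow : ∀ m : Fin N, β m = j → Dt m m = ((n j : ℝ) - 1) * w j + (n i : ℝ) * wt j := by
    intro m hm
    rw [hDt, Matrix.diagonal_apply_eq]
    have hsplit : ∀ p : Fin N, Wt m p =
        (if β p = j ∧ p ≠ m then w j else 0) + (if β p = i then wt j else 0) := by
      intro p
      by_cases hpj : β p = j
      · have hne2 : ¬ (β p = i) := by rw [hpj]; exact hji
        by_cases hpm : p = m
        · subst hpm
          rw [hWtdiag, if_neg (show ¬(β p = j ∧ p ≠ p) from fun h => h.2 rfl), if_neg hne2]
          ring
        · rw [hWtjj m p hm hpj (Ne.symm hpm),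
            if_pos (show β p = j ∧ p ≠ m from ⟨hpj, hpm⟩), if_neg hne2]
          ring
      · by_cases hpi : β p = i
        · rw [hWt, if_neg (show ¬(β m = β p) by rw [hm, hpi]; exact hji),
            if_neg (show ¬(β m = i) by rw [hm]; exact hji), if_pos hpi, hm,
            if_neg (show ¬(β p = j ∧ p ≠ m) from fun h => hpj h.1), if_pos hpi]
          ring
        · rw [hWt, if_neg (show ¬(β m = β p) by rw [hm]; exact fun h => hpj h.symm),
            if_neg (show ¬(β m = i) by rw [hm]; exact hji), if_neg hpi,
            if_neg (show ¬(β p = j ∧ p ≠ m) from fun h => hpj h.1), if_neg hpi]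
          ring
    have h1 : (Finset.univ.filter (fun p : Fin N => β p = j ∧ p ≠ m)).card = n j - 1 := by
      have he : Finset.univ.filter (fun p : Fin N => β p = j ∧ p ≠ m) =
          (Finset.univ.filter (fun p : Fin N => β p = j)).erase m := by
        ext p
        simp only [Finset.mem_filter, Finset.mem_univ, true_and, Finset.mem_erase]
        tauto
      rw [he, Finset.card_erase_of_mem (by simp [hm]), hcard j]
    calc ∑ p, Wt m p
        = ∑ p, ((if β p = j ∧ p ≠ m then w j else 0) + (if β p = i then wt j else 0)) :=
          Finset.sum_congr rfl (fun p _ => hsplit p)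
      _ = (Finset.univ.filter (fun p : Fin N => β p = j ∧ p ≠ m)).card • w j
          + (Finset.univ.filter (fun p : Fin N => β p = i)).card • wt j := by
          rw [Finset.sum_add_distrib, ← Finset.sum_filter, ← Finset.sum_filter,
            Finset.sum_const, Finset.sum_const]
      _ = ((n j : ℝ) - 1) * w j + (n i : ℝ) * wt j := by
          rw [h1, hcard i, nsmul_eq_mul, nsmul_eq_mul, Nat.cast_sub (by omega)]
          norm_num
  set lam : ℝ := (n j : ℝ) * w j + (n i : ℝ) * wt j with hlam
  set v : Fin (n j - 1) → (Fin N → ℝ) :=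
    (fun t => Pi.single (a t) (1 : ℝ) - Pi.single b 1) with hvdef
  have hD : ∀ m p : Fin N, m ≠ p → Dt m p = 0 := by
    intro m p h; rw [hDt, Matrix.diagonal_apply_ne _ h]
  have hLtapp : ∀ m p : Fin N, Lt m p = (if m = p then Dt m m else 0) - Wt m p := by
    intro m p
    rw [hLt, Matrix.sub_apply]
    by_cases h : m = p
    · subst h; simp
    · rw [hD m p h, if_neg h]
  have hker : ∀ t, v t ∈ LinearMap.ker
      (Matrix.toLin' (Lt - lam • (1 : Matrix (Fin N) (Fin N) ℝ))) := by
    intro t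
    rw [LinearMap.mem_ker, Matrix.toLin'_apply, Matrix.sub_mulVec,
      Matrix.smul_mulVec, Matrix.one_mulVec, sub_eq_zero]
    funext m
    have hmv : Lt.mulVec (v t) m = Lt m (a t) - Lt m b := by
      simp [hvdef, Matrix.mulVec_sub, Matrix.mulVec_single]
    rw [hmv]
    have hrhs : (lam • v t) m = lam * ((if m = a t then 1 else 0) - (if m = b then 1 else 0)) := by
      simp [hvdef, Pi.single_apply]
    rw [hrhs]
    by_cases h1 : m = a t
    · rw [h1]
      have hmb : a t ≠ b := hab t
      rw [hLtapp, hLtapp, if_pos rfl, if_neg hmb, hWtdiag,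
        hWtjj (a t) b (hβa t) hβb hmb, hrow (a t) (hβa t), if_pos rfl, if_neg hmb, hlam]
      push_cast
      ring
    · by_cases h2 : m = b
      · rw [h2]
        have hma : b ≠ a t := fun h => h1 (h2.trans h)
        rw [hLtapp, hLtapp, if_neg hma, if_pos rfl, hWtdiag,
          hWtjj b (a t) hβb (hβa t) hma, hrow b hβb, if_neg hma, if_pos rfl, hlam]
        push_cast
        ring
      · rw [hLtapp, hLtapp, if_neg h1, if_neg h2, if_neg h1, if_neg h2]
        by_cases hmj : β m = j
        · rw [hWtjj m (a t) hmj (hβa t) h1, hWtjj m b hmj hβb h2]; ring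
        · by_cases hmi : β m = i
          · rw [hWtij m (a t) hmi (hβa t), hWtij m b hmi hβb]; ring
          · rw [hWt0 m (a t) hmj hmi (hβa t), hWt0 m b hmj hmi hβb]; ring
  have hli : LinearIndependent ℝ v := by
    rw [linearIndependent_iff']
    intro s g hg t ht
    have hval : ∀ s' : Fin (n j - 1), v s' (a t) = if s' = t then 1 else 0 := by
      intro s'
      simp only [hvdef, Pi.sub_apply, Pi.single_apply]
      rw [if_neg (hab t)]
      by_cases h : s' = t
      · subst h; rw [if_pos rfl, if_pos rfl]; ring
      · rw [if_neg (fun hh : a t = a s' => h (hainj hh.symm)), if_neg h]; ring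
    have h0 : ∑ s' ∈ s, g s' * v s' (a t) = 0 := by
      have := congrFun hg (a t)
      simpa using this
    rw [Finset.sum_congr rfl (fun s' _ => by rw [hval s'])] at h0
    simp only [mul_ite, mul_one, mul_zero] at h0
    rwa [Finset.sum_ite_eq' s t g, if_pos ht] at h0
  have hspan : Submodule.span ℝ (Set.range v) ≤ LinearMap.ker
      (Matrix.toLin' (Lt - lam • (1 : Matrix (Fin N) (Fin N) ℝ))) := by
    rw [Submodule.span_le]
    rintro x ⟨t, rfl⟩
    exact hker t
  calc n j - 1 = Fintype.card (Fin (n j - 1)) := by simp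
    _ = Module.finrank ℝ ↥(Submodule.span ℝ (Set.range v)) := (finrank_span_eq_card hli).symm
    _ ≤ _ := Submodule.finrank_mono hspan
end
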